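/- arXiv:1604.08416 — 7 statements merged into one kernel-verified Lean document; each statement's English description precedes it below -/
import Mathlib

section
/- Boundary length of unions of bad squares (Lemma 'cup'). There are universal constants c > 0 and θ₀ > 0 with the following property. Let θ = 2^{−n} ≤ θ₀ for some n ∈ ℕ, μ > 0, and let J* ⊆ ℝ² be a Borel set with H¹(J*) < ∞. Then for all integers 8 ≤ i₁ ≤ i₂ < ∞ and all subfamilies ℛ^j ⊆ 𝒬^j_bad (i₁ ≤ j ≤ i₂), the set R := ⋃_{j=i₁}^{i₂} ⋃_{Q∈ℛ^j} closure(Q''') satisfies H¹(∂R) ≤ c·θ^{−3}·H¹(J* ∩ R). Moreover, there is a set Γ_R ⊇ ∂R which is a finite union of closed line segments, with H¹(Γ_R) ≤ c·θ^{−3}·H¹(J* ∩ R), such that for each connected component R_k of R the set Γ_R ∩ R_k is connected. -/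
open MeasureTheory Set
open scoped ENNReal NNReal

noncomputable section

/-- The Euclidean plane. -/
abbrev E2 := EuclideanSpace ℝ (Fin 2)

/-- The open square `Q_μ = (-μ, μ)²`. -/
def Qsq (μ : ℝ) : Set E2 := {x | ∀ i : Fin 2, |x i| < μ}

/-- `Γ` is a finite union of closed line segments. -/
def FinSegUnion (Γ : Set E2) : Prop :=
  ∃ (n : ℕ) (a b : Fin n → E2), Γ = ⋃ i : Fin n, segment ℝ (a i) (b i)

/-- A dyadic square of the grid `𝒬^i` (for given parameters `θ, μ`):
it is encoded by its scale index `i` and its integer position `k`. -/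
structure DSq where
  idx : ℕ
  pos : Fin 2 → ℤ

namespace DSq

/-- The half-sidelength `s_i = μ θ^i` of a square of `𝒬^i`. -/
def sc (θ μ : ℝ) (Q : DSq) : ℝ := μ * θ ^ Q.idx

/-- The center `p ∈ s(1,1) + 2sℤ²` of the square. -/
def ctr (θ μ : ℝ) (Q : DSq) (j : Fin 2) : ℝ := Q.sc θ μ + 2 * Q.sc θ μ * (Q.pos j : ℝ)

/-- The open square `Q = p + s(-1,1)²` itself. -/
def core (θ μ : ℝ) (Q : DSq) : Set E2 :=
  {x | ∀ j : Fin 2, |x j - Q.ctr θ μ j| < Q.sc θ μ}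

/-- The concentric enlarged square with `lam` times the sidelength
(`lam = 3/2` gives `Q'`, `lam = 3` gives `Q''`, `lam = 5` gives `Q'''`). -/
def enl (θ μ lam : ℝ) (Q : DSq) : Set E2 :=
  {x | ∀ j : Fin 2, |x j - Q.ctr θ μ j| < lam * Q.sc θ μ}

end DSq

/-- The set of bad squares at scale `i` relative to a set `S`:
those with `H¹(S ∩ Q') ≥ θ³ s_i`. -/
def badSq (θ μ : ℝ) (S : Set E2) (i : ℕ) : Set DSq :=
  {Q | Q.idx = i ∧ ENNReal.ofReal (θ ^ 3 * (μ * θ ^ i)) ≤ μH[1] (S ∩ Q.enl θ μ (3 / 2))}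

/-!
Keep only the *essential* squares of `ℛ`, those whose `Q'''` is not covered by the squares `P'''`
of strictly coarser scale in `ℛ`; they have the same union `R`. For `θ ≤ 1/2` the squares `Q'` of
two essential squares of different scales are disjoint (otherwise the finer `Q'''` would lie in the
coarser one), and at a single scale a point lies in at most four squares `Q'`. So the sets
`J* ∩ Q'` overlap at most four-fold; with `H¹(J* ∩ Q') ≥ θ³ s_Q` and `H¹(J*) < ∞` this makes the
essential family finite and bounds the total perimeter `∑ 40 s_Q` of the squares `Q'''` by
`160 θ⁻³ H¹(J* ∩ R)`. Take `Γ_R` to be the union of these perimeters. Two essential squares `Q'''`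
that meet are not nested, so their perimeters meet; since the intersection graph of the squares
in a component of `R` is connected, so is `Γ_R ∩ R_k`.
-/

section Topology
variable {ι X : Type*} [TopologicalSpace X]

theorem IsPreconnected.inter_frontier_nonempty {s t : Set X} (hs : IsPreconnected s)
    (hst : (s ∩ t).Nonempty) (hst' : (s \ t).Nonempty) :
    (s ∩ frontier t).Nonempty := by
  by_contra h
  have hcover : s ⊆ interior t ∪ (closure t)ᶜ := fun x hx => by
    by_cases hxt : x ∈ closure t
    · rw [closure_eq_interior_union_frontier] at hxt
      exact hxt.imp_right fun hxf => (h ⟨x, hx, hxf⟩).elim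
    · exact .inr hxt
  obtain ⟨y, hys, hyt⟩ := hst
  obtain ⟨x, hxs, hxt⟩ := hst'
  have hyint : y ∈ interior t :=
    (hcover hys).resolve_right fun hy => hy (subset_closure hyt)
  exact hxt (interior_subset (hs.subset_left_of_subset_union isOpen_interior
    isClosed_closure.isOpen_compl (disjoint_compl_right.mono_left interior_subset_closure)
    hcover ⟨y, hys, hyint⟩ hxs))

lemma frontier_biUnion_subset_of_isClosed {s : Set ι} {f : ι → Set X}
    (h : IsClosed (⋃ i ∈ s, f i)) : frontier (⋃ i ∈ s, f i) ⊆ ⋃ i ∈ s, frontier (f i) := by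
  intro z hz
  obtain ⟨i, hi, hzi⟩ := mem_iUnion₂.1 (h.frontier_subset hz)
  exact mem_biUnion hi ⟨subset_closure hzi,
    fun hint => hz.2 (interior_mono (subset_biUnion_of_mem hi) hint)⟩

lemma IsPreconnected.reflTransGen_of_finite_closed_cover {K : Set X} (hK : IsPreconnected K)
    {t : Set ι} (ht : t.Finite) {B : ι → Set X} (hB : ∀ i ∈ t, IsClosed (B i))
    (hne : ∀ i ∈ t, (B i).Nonempty) (hKB : K = ⋃ i ∈ t, B i) {i j : ι} (hi : i ∈ t)
    (hj : j ∈ t) : Relation.ReflTransGen (fun a b => (B a ∩ B b).Nonempty ∧ a ∈ t ∧ b ∈ t) i j := by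
  set S := {k ∈ t | Relation.ReflTransGen (fun a b => (B a ∩ B b).Nonempty ∧ a ∈ t ∧ b ∈ t) i k}
  by_contra hij
  have hjS : j ∈ t \ S := ⟨hj, fun h => hij h.2⟩
  have hiS : i ∈ S := ⟨hi, .refl⟩
  have hclosed : ∀ u ⊆ t, IsClosed (⋃ k ∈ u, B k) := fun u hu =>
    (ht.subset hu).isClosed_biUnion fun k hk => hB k (hu hk)
  have hcover : K ⊆ (⋃ k ∈ S, B k) ∪ ⋃ k ∈ t \ S, B k := by
    rw [← biUnion_union, union_sdiff_cancel (sep_subset _ _), hKB]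
  obtain ⟨a, ha⟩ := hne i hi
  obtain ⟨b, hb⟩ := hne j hj
  obtain ⟨z, -, hzS, hzT⟩ := isPreconnected_closed_iff.1 hK _ _ (hclosed S (sep_subset _ _))
    (hclosed _ sdiff_subset) hcover
    ⟨a, hKB ▸ mem_biUnion hi ha, mem_biUnion hiS ha⟩
    ⟨b, hKB ▸ mem_biUnion hj hb, mem_biUnion hjS hb⟩
  obtain ⟨p, hp, hzp⟩ := mem_iUnion₂.1 hzS
  obtain ⟨q, hq, hzq⟩ := mem_iUnion₂.1 hzT
  exact hq.2 ⟨hq.1, hp.2.tail ⟨⟨z, hzp, hzq⟩, hp.1, hq.1⟩⟩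

lemma isConnected_biUnion_inter_connectedComponentIn {s : Set ι} (hs : s.Finite)
    {B Γ : ι → Set X} (hB : ∀ i ∈ s, IsClosed (B i)) (hBc : ∀ i ∈ s, IsPreconnected (B i))
    (hΓ : ∀ i ∈ s, IsConnected (Γ i)) (hΓB : ∀ i ∈ s, Γ i ⊆ B i)
    (hadj : ∀ i ∈ s, ∀ j ∈ s, (B i ∩ B j).Nonempty → (Γ i ∩ Γ j).Nonempty) {x : X}
    (hx : x ∈ ⋃ i ∈ s, B i) :
    IsConnected ((⋃ i ∈ s, Γ i) ∩ connectedComponentIn (⋃ i ∈ s, B i) x) := by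
  set K := connectedComponentIn (⋃ i ∈ s, B i) x
  set t := {i ∈ s | B i ⊆ K}
  have hmeet : ∀ i ∈ s, ∀ y ∈ B i, y ∈ K → i ∈ t := fun i hi y hyB hyK =>
    ⟨hi, ((hBc i hi).subset_connectedComponentIn hyB (subset_biUnion_of_mem hi)).trans
      (connectedComponentIn_eq hyK).symm.subset⟩
  have hK : K = ⋃ i ∈ t, B i := by
    refine (iUnion₂_subset fun i hi => hi.2).antisymm' fun y hyK => ?_
    obtain ⟨i, hi, hyB⟩ := mem_iUnion₂.1 (connectedComponentIn_subset _ _ hyK)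
    exact mem_biUnion (hmeet i hi y hyB hyK) hyB
  have hΓK : (⋃ i ∈ s, Γ i) ∩ K = ⋃ i ∈ t, Γ i := by
    refine Subset.antisymm ?_ (subset_inter (biUnion_subset_biUnion_left (sep_subset _ _))
      (iUnion₂_subset fun i hi => (hΓB i hi.1).trans hi.2))
    rintro y ⟨hyΓ, hyK⟩
    obtain ⟨i, hi, hyi⟩ := mem_iUnion₂.1 hyΓ
    exact mem_biUnion (hmeet i hi y (hΓB i hi hyi) hyK) hyi
  obtain ⟨i₀, hi₀, hxi₀⟩ := mem_iUnion₂.1 hx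
  rw [hΓK]
  refine IsConnected.biUnion_of_reflTransGen ⟨i₀, hmeet i₀ hi₀ x hxi₀ (mem_connectedComponentIn hx)⟩
    (fun i hi => hΓ i hi.1) fun i hi j hj => ?_
  refine Relation.ReflTransGen.mono (fun a b (h : _ ∧ a ∈ t ∧ b ∈ t) =>
      ⟨hadj a h.2.1.1 b h.2.2.1 h.1, h.2.1⟩) _ _
    (isPreconnected_connectedComponentIn.reflTransGen_of_finite_closed_cover
      (hs.subset (sep_subset _ _)) (fun k hk => hB k hk.1)
      (fun k hk => (hΓ k hk.1).nonempty.mono (hΓB k hk.1)) hK hi hj)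

end Topology

theorem Convex.frontier_inter_frontier_nonempty {E : Type*} [AddCommGroup E] [Module ℝ E]
    [TopologicalSpace E] [IsTopologicalAddGroup E] [ContinuousSMul ℝ E] {A B : Set E}
    (hB : Convex ℝ B) (hA : IsPreconnected (frontier A)) (hAB : (A ∩ B).Nonempty)
    (hBA : ¬B ⊆ A) (hfr : ¬frontier A ⊆ B) : (frontier A ∩ frontier B).Nonempty := by
  obtain ⟨y, hyA, hyB⟩ := hAB
  obtain ⟨x, hxB, hxA⟩ := not_subset.1 hBA
  obtain ⟨z, hzseg, hzA⟩ := (convex_segment y x).isPreconnected.inter_frontier_nonempty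
    ⟨y, left_mem_segment ℝ y x, hyA⟩ ⟨x, right_mem_segment ℝ y x, hxA⟩
  obtain ⟨w, hwA, hwB⟩ := not_subset.1 hfr
  exact hA.inter_frontier_nonempty ⟨z, hzA, hB.segment_subset hyB hxB hzseg⟩ ⟨w, hwA, hwB⟩

section BoundedOverlap
variable {ι α : Type*}

def BoundedOverlap (s : Set ι) (A : ι → Set α) (N : ℕ) : Prop :=
  ∀ y (G : Finset ι), ↑G ⊆ s → (∀ i ∈ G, y ∈ A i) → G.card ≤ N

lemma BoundedOverlap.mono {s t : Set ι} {A B : ι → Set α} {N : ℕ} (h : BoundedOverlap s A N)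
    (hts : t ⊆ s) (hBA : ∀ i ∈ t, B i ⊆ A i) : BoundedOverlap t B N :=
  fun y G hG hy => h y G (hG.trans hts) fun i hi => hBA i (hG hi) (hy i hi)

variable [MeasurableSpace α] (μ : Measure α)

lemma BoundedOverlap.sum_measure_le {F : Finset ι} {A : ι → Set α} {N : ℕ}
    (h : BoundedOverlap ↑F A N) (hA : ∀ i ∈ F, MeasurableSet (A i)) :
    ∑ i ∈ F, μ (A i) ≤ N * μ (⋃ i ∈ F, A i) := by
  classical
  have hpt : ∀ y, ∑ i ∈ F, (A i).indicator 1 y ≤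
      (⋃ i ∈ F, A i).indicator (fun _ => (N : ℝ≥0∞)) y := by
    intro y
    have hsum : ∑ i ∈ F, (A i).indicator (1 : α → ℝ≥0∞) y = (F.filter (y ∈ A ·)).card := by
      simp [Set.indicator_apply, Finset.sum_boole]
    by_cases hy : y ∈ ⋃ i ∈ F, A i
    · rw [indicator_of_mem hy, hsum, Nat.cast_le]
      exact h y _ (Finset.coe_subset.2 (Finset.filter_subset _ _)) fun i hi =>
        (Finset.mem_filter.1 hi).2
    · rw [indicator_of_notMem hy, hsum, nonpos_iff_eq_zero, Nat.cast_eq_zero, Finset.card_eq_zero,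
        Finset.filter_eq_empty_iff]
      exact fun i hi hyi => hy (mem_biUnion hi hyi)
  calc ∑ i ∈ F, μ (A i) = ∫⁻ y, ∑ i ∈ F, (A i).indicator 1 y ∂μ := by
        rw [lintegral_finsetSum _ fun i hi => measurable_one.indicator (hA i hi)]
        exact Finset.sum_congr rfl fun i hi => (lintegral_indicator_one (hA i hi)).symm
    _ ≤ ∫⁻ y, (⋃ i ∈ F, A i).indicator (fun _ => (N : ℝ≥0∞)) y ∂μ := lintegral_mono hpt
    _ = N * μ (⋃ i ∈ F, A i) := lintegral_indicator_const (F.measurableSet_biUnion hA) _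

lemma BoundedOverlap.finite {s : Set ι} {A : ι → Set α} {N : ℕ} (h : BoundedOverlap s A N)
    (hA : ∀ i ∈ s, MeasurableSet (A i)) {ε : ℝ≥0∞} (hε : ε ≠ 0) (hεA : ∀ i ∈ s, ε ≤ μ (A i))
    {T : Set α} (hT : μ T ≠ ∞) (hAT : ∀ i ∈ s, A i ⊆ T) : s.Finite := by
  by_contra hinf
  have hNT : (N : ℝ≥0∞) * μ T ≠ ∞ := ENNReal.mul_ne_top (ENNReal.natCast_ne_top N) hT
  obtain ⟨n, hn⟩ := ENNReal.exists_nat_gt (ENNReal.div_lt_top hNT hε).ne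
  obtain ⟨G, hGs, rfl⟩ := Set.Infinite.exists_subset_card_eq hinf n
  refine ((ENNReal.div_lt_iff (.inl hε) (.inr hNT)).1 hn).not_ge ?_
  calc (G.card : ℝ≥0∞) * ε = ∑ i ∈ G, ε := by simp
    _ ≤ ∑ i ∈ G, μ (A i) := Finset.sum_le_sum fun i hi => hεA i (hGs hi)
    _ ≤ N * μ (⋃ i ∈ G, A i) :=
        (h.mono hGs fun _ _ => subset_rfl).sum_measure_le μ fun i hi => hA i (hGs hi)
    _ ≤ N * μ T := by gcongr; exact iUnion₂_subset fun i hi => hAT i (hGs hi)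

end BoundedOverlap

section EssentialPart
variable {ι α : Type*}

def essentialPart (rank : ι → ℕ) (f : ι → Set α) (s : Set ι) : Set ι :=
  {i ∈ s | ∃ x ∈ f i, ∀ j ∈ s, rank j < rank i → x ∉ f j}

lemma essentialPart_subset (rank : ι → ℕ) (f : ι → Set α) (s : Set ι) :
    essentialPart rank f s ⊆ s :=
  sep_subset _ _

lemma biUnion_essentialPart (rank : ι → ℕ) (f : ι → Set α) (s : Set ι) :
    ⋃ i ∈ essentialPart rank f s, f i = ⋃ i ∈ s, f i := by
  refine (biUnion_subset_biUnion_left (essentialPart_subset rank f s)).antisymm fun x hx => ?_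
  obtain ⟨i, hi, hxi⟩ := mem_iUnion₂.1 hx
  obtain ⟨j, ⟨hjs, hxj⟩, hmin⟩ :=
    (InvImage.wf rank wellFounded_lt).has_min {j ∈ s | x ∈ f j} ⟨i, hi, hxi⟩
  exact mem_biUnion ⟨hjs, x, hxj, fun k hks hlt hxk => hmin k ⟨hks, hxk⟩ hlt⟩ hxj

end EssentialPart

section Cube
variable {ι : Type*}

def closedCube (c : ι → ℝ) (r : ℝ) : Set (EuclideanSpace ℝ ι) := {x | ∀ j, |x j - c j| ≤ r}

def openCube (c : ι → ℝ) (r : ℝ) : Set (EuclideanSpace ℝ ι) := {x | ∀ j, |x j - c j| < r}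

variable {c : ι → ℝ} {r : ℝ}

lemma closedCube_eq_preimage : closedCube c r =
    EuclideanSpace.equiv ι ℝ ⁻¹' univ.pi fun j => Metric.closedBall (c j) r := by
  ext x
  simp [closedCube, Real.dist_eq]

lemma openCube_eq_preimage : openCube c r =
    EuclideanSpace.equiv ι ℝ ⁻¹' univ.pi fun j => Metric.ball (c j) r := by
  ext x
  simp [openCube, Real.dist_eq]

lemma openCube_subset_closedCube {r' : ℝ} (h : r ≤ r') : openCube c r ⊆ closedCube c r' :=
  fun _ hx j => (hx j).le.trans h

lemma isClosed_closedCube : IsClosed (closedCube c r) := by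
  rw [closedCube_eq_preimage]
  exact (isClosed_set_pi fun _ _ => Metric.isClosed_closedBall).preimage
    (EuclideanSpace.equiv ι ℝ).continuous

lemma isOpen_openCube [Finite ι] : IsOpen (openCube c r) := by
  rw [openCube_eq_preimage]
  exact (isOpen_set_pi finite_univ fun _ _ => Metric.isOpen_ball).preimage
    (EuclideanSpace.equiv ι ℝ).continuous

lemma closure_openCube (hr : 0 < r) : closure (openCube c r) = closedCube c r := by
  rw [openCube_eq_preimage, closedCube_eq_preimage,
    ← (EuclideanSpace.equiv ι ℝ).preimage_closure, closure_pi_set]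
  simp_rw [closure_ball _ hr.ne']

lemma interior_closedCube [Finite ι] : interior (closedCube c r) = openCube c r := by
  rw [openCube_eq_preimage, closedCube_eq_preimage,
    ← (EuclideanSpace.equiv ι ℝ).isOpenMap.preimage_interior_eq_interior_preimage
      (EuclideanSpace.equiv ι ℝ).continuous, interior_pi_set finite_univ]
  simp_rw [interior_closedBall']

lemma frontier_closedCube [Finite ι] :
    frontier (closedCube c r) = closedCube c r \ openCube c r := by
  rw [frontier, isClosed_closedCube.closure_eq, interior_closedCube]

lemma convex_closedCube : Convex ℝ (closedCube c r) := by
  rw [closedCube_eq_preimage]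
  exact (convex_pi fun j _ => convex_closedBall (c j) r).linear_preimage
    (EuclideanSpace.equiv ι ℝ).toLinearEquiv.toLinearMap

lemma abs_sub_add_le_of_closedCube_subset {c₁ c₂ : ι → ℝ} {r₁ r₂ : ℝ} (hr₁ : 0 ≤ r₁)
    (h : closedCube c₁ r₁ ⊆ closedCube c₂ r₂) (j : ι) : |c₁ j - c₂ j| + r₁ ≤ r₂ := by
  classical
  have key : ∀ t, |t - c₁ j| ≤ r₁ → |t - c₂ j| ≤ r₂ := fun t ht => by
    have hx : WithLp.toLp 2 (Function.update c₁ j t) ∈ closedCube c₁ r₁ := fun k => by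
      rcases eq_or_ne k j with rfl | hk <;> simp [*]
    simpa using h hx j
  have hright := abs_le.1 (key (c₁ j + r₁) (by simp [abs_of_nonneg hr₁]))
  have hleft := abs_le.1 (key (c₁ j - r₁) (by simp [abs_of_nonneg hr₁]))
  rw [← le_sub_iff_add_le, abs_le]
  constructor <;> linarith

lemma mem_segment_iff_of_axis {a b x : EuclideanSpace ℝ ι} {j : ι} (hab : a j < b j)
    (heq : ∀ k ≠ j, a k = b k) :
    x ∈ segment ℝ a b ↔ x j ∈ Icc (a j) (b j) ∧ ∀ k ≠ j, x k = a k := by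
  rw [segment_eq_image]
  constructor
  · rintro ⟨t, ⟨ht₀, ht₁⟩, rfl⟩
    refine ⟨⟨?_, ?_⟩, fun k hk => ?_⟩
    · simp only [PiLp.add_apply, PiLp.smul_apply, smul_eq_mul]; nlinarith
    · simp only [PiLp.add_apply, PiLp.smul_apply, smul_eq_mul]; nlinarith
    · simp only [PiLp.add_apply, PiLp.smul_apply, smul_eq_mul, ← heq k hk]; ring
  · rintro ⟨⟨hj₀, hj₁⟩, hk⟩
    have hpos : 0 < b j - a j := sub_pos.2 hab
    refine ⟨(x j - a j) / (b j - a j), ⟨by positivity, (div_le_one hpos).2 (by linarith)⟩, ?_⟩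
    ext k
    simp only [PiLp.add_apply, PiLp.smul_apply, smul_eq_mul]
    rcases eq_or_ne k j with rfl | hkj
    · field_simp; ring
    · rw [hk k hkj, ← heq k hkj]; ring

lemma dist_eq_of_axis [Fintype ι] {a b : EuclideanSpace ℝ ι} {j : ι} (heq : ∀ k ≠ j, a k = b k) :
    dist a b = |a j - b j| := by
  rw [EuclideanSpace.dist_eq, Finset.sum_eq_single j (fun k _ hk => by simp [heq k hk]) (by simp),
    Real.sqrt_sq_eq_abs, Real.dist_eq, abs_abs]

end Cube

lemma finSegUnion_empty : FinSegUnion ∅ :=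
  ⟨0, Fin.elim0, Fin.elim0, by simp⟩

lemma finSegUnion_segment (a b : E2) : FinSegUnion (segment ℝ a b) :=
  ⟨1, fun _ => a, fun _ => b, (iUnion_const _).symm⟩

lemma FinSegUnion.union {s t : Set E2} (hs : FinSegUnion s) (ht : FinSegUnion t) :
    FinSegUnion (s ∪ t) := by
  obtain ⟨n, a, b, rfl⟩ := hs
  obtain ⟨m, a', b', rfl⟩ := ht
  refine ⟨n + m, Fin.append a a', Fin.append b b', ?_⟩
  rw [← finSumFinEquiv.surjective.iUnion_comp, iUnion_sum]
  simp only [finSumFinEquiv_apply_left, finSumFinEquiv_apply_right, Fin.append_left,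
    Fin.append_right]

lemma Set.Finite.finSegUnion_biUnion {ι : Type*} {s : Set ι} (hs : s.Finite) {f : ι → Set E2}
    (h : ∀ i ∈ s, FinSegUnion (f i)) : FinSegUnion (⋃ i ∈ s, f i) := by
  induction s, hs using Set.Finite.induction_on with
  | empty => simpa using finSegUnion_empty
  | insert _ _ ih =>
    rw [biUnion_insert]
    exact (h _ (mem_insert _ _)).union (ih fun i hi => h i (mem_insert_of_mem _ hi))

section Square
variable {c : Fin 2 → ℝ} {r : ℝ}

def squareEdges (c : Fin 2 → ℝ) (r : ℝ) : Set E2 :=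
  segment ℝ !₂[c 0 - r, c 1 - r] !₂[c 0 - r, c 1 + r] ∪
    segment ℝ !₂[c 0 - r, c 1 - r] !₂[c 0 + r, c 1 - r] ∪
    segment ℝ !₂[c 0 - r, c 1 + r] !₂[c 0 + r, c 1 + r] ∪
    segment ℝ !₂[c 0 + r, c 1 - r] !₂[c 0 + r, c 1 + r]

lemma mem_vertical_segment_iff {a b₀ b₁ : ℝ} (h : b₀ < b₁) {x : E2} :
    x ∈ segment ℝ !₂[a, b₀] !₂[a, b₁] ↔ x 0 = a ∧ x 1 ∈ Icc b₀ b₁ := by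
  rw [mem_segment_iff_of_axis (j := 1) (by simpa using h) (by simp [Fin.forall_fin_two])]
  simp [Fin.forall_fin_two, and_comm]

lemma mem_horizontal_segment_iff {a₀ a₁ b : ℝ} (h : a₀ < a₁) {x : E2} :
    x ∈ segment ℝ !₂[a₀, b] !₂[a₁, b] ↔ x 0 ∈ Icc a₀ a₁ ∧ x 1 = b := by
  rw [mem_segment_iff_of_axis (j := 0) (by simpa using h) (by simp [Fin.forall_fin_two])]
  simp [Fin.forall_fin_two]

lemma frontier_closedCube_eq_squareEdges (hr : 0 < r) :
    frontier (closedCube c r) = squareEdges c r := by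
  have h₀ : c 0 - r < c 0 + r := by linarith
  have h₁ : c 1 - r < c 1 + r := by linarith
  rw [frontier_closedCube]
  ext x
  simp only [squareEdges, mem_union, mem_sdiff, closedCube, openCube,
    mem_ofPred_eq, Fin.forall_fin_two, mem_vertical_segment_iff h₁,
    mem_horizontal_segment_iff h₀, mem_Icc, abs_le, abs_lt, not_and_or, not_lt]
  grind

lemma isConnected_squareEdges : IsConnected (squareEdges c r) := by
  have hseg : ∀ a b : E2, IsConnected (segment ℝ a b) := fun a b =>
    (convex_segment a b).isConnected ⟨a, left_mem_segment ℝ a b⟩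
  refine .union ⟨!₂[c 0 + r, c 1 - r], ?_, left_mem_segment ℝ _ _⟩
    (.union ⟨!₂[c 0 - r, c 1 + r], ?_, left_mem_segment ℝ _ _⟩
      (.union ⟨!₂[c 0 - r, c 1 - r], left_mem_segment ℝ _ _, left_mem_segment ℝ _ _⟩
        (hseg _ _) (hseg _ _)) (hseg _ _)) (hseg _ _)
  · exact .inl (.inr (right_mem_segment ℝ _ _))
  · exact .inl (right_mem_segment ℝ _ _)

lemma hausdorffMeasure_squareEdges_le (hr : 0 ≤ r) :
    μH[1] (squareEdges c r) ≤ ENNReal.ofReal (8 * r) := by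
  have hlen : ∀ t : ℝ, |t - r - (t + r)| = 2 * r := fun t => by
    rw [show t - r - (t + r) = -(2 * r) by ring, abs_neg, abs_of_nonneg (by positivity)]
  have hedge : ∀ {a b : E2} (j : Fin 2), (∀ k ≠ j, a k = b k) → |a j - b j| = 2 * r →
      μH[1] (segment ℝ a b) ≤ ENNReal.ofReal (2 * r) := fun j heq hj => by
    rw [hausdorffMeasure_segment, edist_dist, dist_eq_of_axis heq, hj]
  calc μH[1] (squareEdges c r)
      ≤ ENNReal.ofReal (2 * r) + ENNReal.ofReal (2 * r) + ENNReal.ofReal (2 * r) +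
          ENNReal.ofReal (2 * r) := by
        refine (measure_union_le _ _).trans (add_le_add ((measure_union_le _ _).trans
          (add_le_add ((measure_union_le _ _).trans (add_le_add ?_ ?_)) ?_)) ?_)
        · exact hedge 1 (by simp [Fin.forall_fin_two]) (by simpa using hlen (c 1))
        · exact hedge 0 (by simp [Fin.forall_fin_two]) (by simpa using hlen (c 0))
        · exact hedge 0 (by simp [Fin.forall_fin_two]) (by simpa using hlen (c 0))
        · exact hedge 1 (by simp [Fin.forall_fin_two]) (by simpa using hlen (c 1))
    _ = ENNReal.ofReal (8 * r) := by
        rw [show 8 * r = 2 * r + 2 * r + 2 * r + 2 * r by ring, ENNReal.ofReal_add,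
          ENNReal.ofReal_add, ENNReal.ofReal_add] <;> positivity

lemma finSegUnion_squareEdges (c : Fin 2 → ℝ) (r : ℝ) : FinSegUnion (squareEdges c r) :=
  (((finSegUnion_segment _ _).union (finSegUnion_segment _ _)).union
    (finSegUnion_segment _ _)).union (finSegUnion_segment _ _)

lemma closedCube_subset_of_squareEdges_subset {c : Fin 2 → ℝ} {r : ℝ} (hr : 0 < r) {B : Set E2}
    (hB : Convex ℝ B) (h : squareEdges c r ⊆ B) : closedCube c r ⊆ B := by
  intro x hx
  have h₀ := abs_le.1 (hx 0)
  have h₁ := abs_le.1 (hx 1)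
  have hlt : c 1 - r < c 1 + r := by linarith
  have hleft : !₂[c 0 - r, x 1] ∈ squareEdges c r :=
    .inl (.inl (.inl ((mem_vertical_segment_iff hlt).2 ⟨rfl, by simp; constructor <;> linarith⟩)))
  have hright : !₂[c 0 + r, x 1] ∈ squareEdges c r :=
    .inr ((mem_vertical_segment_iff hlt).2 ⟨rfl, by simp; constructor <;> linarith⟩)
  refine hB.segment_subset (h hleft) (h hright) ((mem_horizontal_segment_iff (by linarith)).2 ?_)
  exact ⟨⟨by simp; linarith, by simp; linarith⟩, by simp⟩

lemma isConnected_frontier_closedCube (hr : 0 < r) : IsConnected (frontier (closedCube c r)) :=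
  frontier_closedCube_eq_squareEdges hr ▸ isConnected_squareEdges

lemma finSegUnion_frontier_closedCube (hr : 0 < r) : FinSegUnion (frontier (closedCube c r)) :=
  frontier_closedCube_eq_squareEdges hr ▸ finSegUnion_squareEdges c r

lemma hausdorffMeasure_frontier_closedCube_le (hr : 0 < r) :
    μH[1] (frontier (closedCube c r)) ≤ ENNReal.ofReal (8 * r) :=
  frontier_closedCube_eq_squareEdges hr ▸ hausdorffMeasure_squareEdges_le hr.le

lemma frontier_closedCube_inter_nonempty {c₁ c₂ : Fin 2 → ℝ} {r₁ r₂ : ℝ} (hr₁ : 0 < r₁)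
    (hne : (closedCube c₁ r₁ ∩ closedCube c₂ r₂).Nonempty)
    (h₁₂ : ¬closedCube c₁ r₁ ⊆ closedCube c₂ r₂) (h₂₁ : ¬closedCube c₂ r₂ ⊆ closedCube c₁ r₁) :
    (frontier (closedCube c₁ r₁) ∩ frontier (closedCube c₂ r₂)).Nonempty := by
  refine convex_closedCube.frontier_inter_frontier_nonempty ?_ hne h₂₁ ?_
  · rw [frontier_closedCube_eq_squareEdges hr₁]; exact isConnected_squareEdges.isPreconnected
  · rw [frontier_closedCube_eq_squareEdges hr₁]
    exact fun h => h₁₂ (closedCube_subset_of_squareEdges_subset hr₁ convex_closedCube h)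

end Square

lemma Int.mem_Icc_floor_of_lt_of_lt {a : ℝ} {p : ℤ} (h₁ : a < p) (h₂ : p < a + 2) :
    p ∈ Finset.Icc (⌊a⌋ + 1) (⌊a⌋ + 2) := by
  have := Int.lt_floor_add_one a
  refine Finset.mem_Icc.2 ⟨Int.floor_lt.2 h₁, Int.lt_add_one_iff.1 ?_⟩
  exact_mod_cast (by linarith : (p : ℝ) < ⌊a⌋ + 2 + 1)

namespace DSq
variable {θ μ : ℝ}

def closedEnl (θ μ lam : ℝ) (Q : DSq) : Set E2 := closedCube (Q.ctr θ μ) (lam * Q.sc θ μ)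

lemma sc_pos (hθ : 0 < θ) (hμ : 0 < μ) (Q : DSq) : 0 < Q.sc θ μ := mul_pos hμ (pow_pos hθ _)

lemma closure_enl (hθ : 0 < θ) (hμ : 0 < μ) {lam : ℝ} (hlam : 0 < lam) (Q : DSq) :
    closure (Q.enl θ μ lam) = Q.closedEnl θ μ lam :=
  closure_openCube (mul_pos hlam (Q.sc_pos hθ hμ))

lemma sc_le_mul_sc (hθ₀ : 0 ≤ θ) (hθ₁ : θ ≤ 1) (hμ : 0 ≤ μ) {P Q : DSq} (h : P.idx < Q.idx) :
    Q.sc θ μ ≤ θ * P.sc θ μ := by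
  have : θ ^ Q.idx ≤ θ ^ (P.idx + 1) := pow_le_pow_of_le_one hθ₀ hθ₁ h
  calc Q.sc θ μ ≤ μ * θ ^ (P.idx + 1) := mul_le_mul_of_nonneg_left this hμ
    _ = θ * P.sc θ μ := by rw [sc, pow_succ]; ring

lemma closedEnl_subset_of_enl_inter_nonempty (hθ₀ : 0 ≤ θ) (hθ : θ ≤ 1 / 2) (hμ : 0 ≤ μ)
    {P Q : DSq} (hlt : P.idx < Q.idx) (hPQ : (P.enl θ μ (3 / 2) ∩ Q.enl θ μ (3 / 2)).Nonempty) :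
    Q.closedEnl θ μ 5 ⊆ P.closedEnl θ μ 5 := by
  obtain ⟨y, hyP, hyQ⟩ := hPQ
  have hsc := sc_le_mul_sc hθ₀ (hθ.trans (by norm_num)) hμ hlt
  have hsP : 0 ≤ P.sc θ μ := mul_nonneg hμ (pow_nonneg hθ₀ _)
  have hθP : θ * P.sc θ μ ≤ 1 / 2 * P.sc θ μ := mul_le_mul_of_nonneg_right hθ hsP
  intro z hz j
  calc |z j - P.ctr θ μ j| ≤ |z j - Q.ctr θ μ j| + |y j - Q.ctr θ μ j| + |y j - P.ctr θ μ j| := by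
        have h₁ := abs_sub_le (z j) (Q.ctr θ μ j) (P.ctr θ μ j)
        have h₂ := abs_sub_le (Q.ctr θ μ j) (y j) (P.ctr θ μ j)
        rw [abs_sub_comm (Q.ctr θ μ j) (y j)] at h₂
        linarith
    _ ≤ 5 * Q.sc θ μ + 3 / 2 * Q.sc θ μ + 3 / 2 * P.sc θ μ := by
        gcongr
        exacts [hz j, (hyQ j).le, (hyP j).le]
    _ ≤ 5 * P.sc θ μ := by linarith

lemma eq_of_idx_eq_of_closedEnl_subset (hθ : 0 < θ) (hμ : 0 < μ) {lam : ℝ} (hlam : 0 ≤ lam)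
    {A B : DSq} (hidx : A.idx = B.idx) (h : A.closedEnl θ μ lam ⊆ B.closedEnl θ μ lam) :
    A = B := by
  have hsc : A.sc θ μ = B.sc θ μ := by rw [sc, sc, hidx]
  have hpos : A.pos = B.pos := funext fun j => by
    have hj := abs_sub_add_le_of_closedCube_subset (mul_nonneg hlam (A.sc_pos hθ hμ).le) h j
    rw [hsc, add_le_iff_nonpos_left, abs_nonpos_iff, sub_eq_zero, ctr, ctr, hsc] at hj
    exact_mod_cast mul_left_cancel₀ (by have := B.sc_pos hθ hμ; positivity) (add_left_cancel hj)
  cases A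
  cases B
  simp_all

lemma not_closedEnl_subset_of_idx_lt (hθ : 0 < θ) (hθ₁ : θ < 1) (hμ : 0 < μ) {lam : ℝ}
    (hlam : 0 < lam) {A B : DSq} (h : A.idx < B.idx) :
    ¬A.closedEnl θ μ lam ⊆ B.closedEnl θ μ lam := fun hsub => by
  have hle := abs_sub_add_le_of_closedCube_subset (mul_pos hlam (A.sc_pos hθ hμ)).le hsub 0
  have hlt : B.sc θ μ < A.sc θ μ :=
    mul_lt_mul_of_pos_left (pow_lt_pow_right_of_lt_one₀ hθ hθ₁ h) hμ
  nlinarith [abs_nonneg (A.ctr θ μ 0 - B.ctr θ μ 0)]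

lemma card_le_four_of_forall_mem_enl (hθ : 0 < θ) (hμ : 0 < μ) {G : Finset DSq} {i : ℕ}
    {y : E2} (hG : ∀ Q ∈ G, Q.idx = i ∧ y ∈ Q.enl θ μ (3 / 2)) : G.card ≤ 4 := by
  have hs : 0 < 2 * (μ * θ ^ i) := by positivity
  set a : Fin 2 → ℝ := fun j => (y j - μ * θ ^ i) / (2 * (μ * θ ^ i)) - 3 / 4
  have hpos : ∀ Q ∈ G, Q.pos ∈ Fintype.piFinset fun j => Finset.Icc (⌊a j⌋ + 1) (⌊a j⌋ + 2) := by
    intro Q hQ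
    refine Fintype.mem_piFinset.2 fun j => ?_
    have h := (hG Q hQ).2 j
    simp only [ctr, sc, (hG Q hQ).1] at h
    have key : |(y j - μ * θ ^ i) / (2 * (μ * θ ^ i)) - Q.pos j| < 3 / 4 := by
      rw [show (y j - μ * θ ^ i) / (2 * (μ * θ ^ i)) - Q.pos j =
          (y j - (μ * θ ^ i + 2 * (μ * θ ^ i) * Q.pos j)) / (2 * (μ * θ ^ i)) by field_simp; ring,
        abs_div, abs_of_pos hs, div_lt_iff₀ hs]
      linarith
    have := abs_lt.1 key
    exact Int.mem_Icc_floor_of_lt_of_lt (by simp only [a]; linarith) (by simp only [a]; linarith)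
  calc G.card ≤ (Fintype.piFinset fun j => Finset.Icc (⌊a j⌋ + 1) (⌊a j⌋ + 2)).card :=
        Finset.card_le_card_of_injOn DSq.pos hpos fun P hP Q hQ hPQ => by
          have := (hG P hP).1.trans (hG Q hQ).1.symm
          cases P
          cases Q
          simp_all
    _ = 4 := by simp

lemma idx_eq_of_enl_inter_nonempty (hθ₀ : 0 ≤ θ) (hθ : θ ≤ 1 / 2) (hμ : 0 ≤ μ) {ℛ : Set DSq}
    {P Q : DSq}
    (hP : P ∈ essentialPart idx (closedEnl θ μ 5) ℛ)
    (hQ : Q ∈ essentialPart idx (closedEnl θ μ 5) ℛ)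
    (hPQ : (P.enl θ μ (3 / 2) ∩ Q.enl θ μ (3 / 2)).Nonempty) : P.idx = Q.idx := by
  have key : ∀ {P Q : DSq}, P ∈ ℛ → Q ∈ essentialPart idx (closedEnl θ μ 5) ℛ →
      (P.enl θ μ (3 / 2) ∩ Q.enl θ μ (3 / 2)).Nonempty → ¬P.idx < Q.idx := fun hP hQ hPQ hlt => by
    obtain ⟨x, hxQ, hx⟩ := hQ.2
    exact hx _ hP hlt (closedEnl_subset_of_enl_inter_nonempty hθ₀ hθ hμ hlt hPQ hxQ)
  exact le_antisymm (not_lt.1 (key hQ.1 hP (inter_comm _ _ ▸ hPQ))) (not_lt.1 (key hP.1 hQ hPQ))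

lemma boundedOverlap_essentialPart (hθ₀ : 0 < θ) (hθ : θ ≤ 1 / 2) (hμ : 0 < μ) (ℛ : Set DSq) :
    BoundedOverlap (essentialPart idx (closedEnl θ μ 5) ℛ) (enl θ μ (3 / 2)) 4 := by
  intro y G hG hy
  obtain rfl | ⟨Q₀, hQ₀⟩ := G.eq_empty_or_nonempty
  · simp
  exact card_le_four_of_forall_mem_enl hθ₀ hμ fun Q hQ =>
    ⟨idx_eq_of_enl_inter_nonempty hθ₀.le hθ hμ.le (hG hQ) (hG hQ₀) ⟨y, hy Q hQ, hy Q₀ hQ₀⟩, hy Q hQ⟩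

lemma frontier_closedEnl_inter_nonempty (hθ : 0 < θ) (hθ₁ : θ < 1) (hμ : 0 < μ) {lam : ℝ}
    (hlam : 0 < lam) {ℛ : Set DSq} {P Q : DSq} (hP : P ∈ essentialPart idx (closedEnl θ μ lam) ℛ)
    (hQ : Q ∈ essentialPart idx (closedEnl θ μ lam) ℛ)
    (hPQ : (P.closedEnl θ μ lam ∩ Q.closedEnl θ μ lam).Nonempty) :
    (frontier (P.closedEnl θ μ lam) ∩ frontier (Q.closedEnl θ μ lam)).Nonempty := by
  wlog hle : P.idx ≤ Q.idx generalizing P Q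
  · exact inter_comm _ _ ▸ this hQ hP (inter_comm _ _ ▸ hPQ) (le_of_not_ge hle)
  obtain rfl | hne := eq_or_ne P Q
  · rw [inter_self]
    exact (isConnected_frontier_closedCube (mul_pos hlam (P.sc_pos hθ hμ))).nonempty
  have hQP : ¬Q.closedEnl θ μ lam ⊆ P.closedEnl θ μ lam := by
    rcases hle.lt_or_eq with hlt | heq
    · obtain ⟨x, hxQ, hx⟩ := hQ.2
      exact fun h => hx P hP.1 hlt (h hxQ)
    · exact fun h => hne (eq_of_idx_eq_of_closedEnl_subset hθ hμ hlam.le heq.symm h).symm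
  have hPQ' : ¬P.closedEnl θ μ lam ⊆ Q.closedEnl θ μ lam := by
    rcases hle.lt_or_eq with hlt | heq
    · exact not_closedEnl_subset_of_idx_lt hθ hθ₁ hμ hlam hlt
    · exact fun h => hne (eq_of_idx_eq_of_closedEnl_subset hθ hμ hlam.le heq h)
  exact frontier_closedCube_inter_nonempty (mul_pos hlam (P.sc_pos hθ hμ)) hPQ hPQ' hQP

lemma ofReal_le_of_mem_badSq (hθ₀ : 0 ≤ θ) (hθ₁ : θ ≤ 1) (hμ : 0 ≤ μ) {S : Set E2} {Q : DSq}
    {i : ℕ} (hQ : Q ∈ badSq θ μ S Q.idx) (hi : Q.idx ≤ i) :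
    ENNReal.ofReal (θ ^ 3 * (μ * θ ^ i)) ≤ μH[1] (S ∩ Q.enl θ μ (3 / 2)) := by
  refine le_trans (ENNReal.ofReal_le_ofReal ?_) hQ.2
  exact mul_le_mul_of_nonneg_left (mul_le_mul_of_nonneg_left (pow_le_pow_of_le_one hθ₀ hθ₁ hi) hμ)
    (by positivity)

lemma hausdorffMeasure_frontier_closedEnl_le (hθ : 0 < θ) (hμ : 0 < μ) {S : Set E2} {Q : DSq}
    {i : ℕ} (hQ : Q ∈ badSq θ μ S i) :
    μH[1] (frontier (Q.closedEnl θ μ 5)) ≤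
      ENNReal.ofReal (40 / θ ^ 3) * μH[1] (S ∩ Q.enl θ μ (3 / 2)) :=
  calc μH[1] (frontier (Q.closedEnl θ μ 5)) ≤ ENNReal.ofReal (8 * (5 * Q.sc θ μ)) :=
        hausdorffMeasure_frontier_closedCube_le (by have := Q.sc_pos hθ hμ; positivity)
    _ = ENNReal.ofReal (40 / θ ^ 3) * ENNReal.ofReal (θ ^ 3 * (μ * θ ^ i)) := by
        rw [← ENNReal.ofReal_mul (by positivity), sc, hQ.1]
        field_simp
        ring_nf
    _ ≤ ENNReal.ofReal (40 / θ ^ 3) * μH[1] (S ∩ Q.enl θ μ (3 / 2)) := by gcongr; exact hQ.2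

lemma hausdorffMeasure_biUnion_frontier_closedEnl_le (hθ : 0 < θ) (hμ : 0 < μ) {S : Set E2}
    (hS : MeasurableSet S) {𝒩 : Set DSq} (hfin : 𝒩.Finite)
    (hbad : ∀ Q ∈ 𝒩, Q ∈ badSq θ μ S Q.idx) (hover : BoundedOverlap 𝒩 (enl θ μ (3 / 2)) 4) :
    μH[1] (⋃ Q ∈ 𝒩, frontier (Q.closedEnl θ μ 5)) ≤
      ENNReal.ofReal (160 / θ ^ 3) * μH[1] (S ∩ ⋃ Q ∈ 𝒩, Q.closedEnl θ μ 5) := by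
  lift 𝒩 to Finset DSq using hfin
  have hsub : ⋃ Q ∈ 𝒩, S ∩ Q.enl θ μ (3 / 2) ⊆ S ∩ ⋃ Q ∈ 𝒩, Q.closedEnl θ μ 5 :=
    iUnion₂_subset fun Q hQ => inter_subset_inter_right _ <|
      (openCube_subset_closedCube (by have := Q.sc_pos hθ hμ; linarith)).trans
        (subset_biUnion_of_mem (u := fun Q => Q.closedEnl θ μ 5) hQ)
  calc μH[1] (⋃ Q ∈ 𝒩, frontier (Q.closedEnl θ μ 5))
      ≤ ∑ Q ∈ 𝒩, μH[1] (frontier (Q.closedEnl θ μ 5)) := measure_biUnion_finset_le _ _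
    _ ≤ ∑ Q ∈ 𝒩, ENNReal.ofReal (40 / θ ^ 3) * μH[1] (S ∩ Q.enl θ μ (3 / 2)) :=
        Finset.sum_le_sum fun Q hQ => hausdorffMeasure_frontier_closedEnl_le hθ hμ (hbad Q hQ)
    _ = ENNReal.ofReal (40 / θ ^ 3) * ∑ Q ∈ 𝒩, μH[1] (S ∩ Q.enl θ μ (3 / 2)) :=
        (Finset.mul_sum _ _ _).symm
    _ ≤ ENNReal.ofReal (40 / θ ^ 3) * (4 * μH[1] (⋃ Q ∈ 𝒩, S ∩ Q.enl θ μ (3 / 2))) := by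
        gcongr
        exact_mod_cast (hover.mono subset_rfl fun _ _ => inter_subset_right).sum_measure_le _
          fun Q _ => hS.inter isOpen_openCube.measurableSet
    _ ≤ ENNReal.ofReal (40 / θ ^ 3) * (4 * μH[1] (S ∩ ⋃ Q ∈ 𝒩, Q.closedEnl θ μ 5)) := by
        gcongr
    _ = ENNReal.ofReal (160 / θ ^ 3) * μH[1] (S ∩ ⋃ Q ∈ 𝒩, Q.closedEnl θ μ 5) := by
        rw [← mul_assoc, ← ENNReal.ofReal_ofNat 4, ← ENNReal.ofReal_mul (by positivity)]
        ring_nf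

end DSq

/-- **Boundary length of unions of bad squares** (Lemma 4.3 / "cup"). -/
theorem boundary_length_bad_square_unions :
    ∃ c θ₀ : ℝ, 0 < c ∧ 0 < θ₀ ∧
    ∀ (n₀ : ℕ) (θ : ℝ), θ = (1 / 2 : ℝ) ^ n₀ → θ ≤ θ₀ →
    ∀ μ : ℝ, 0 < μ →
    ∀ Jst : Set E2, MeasurableSet Jst → μH[1] Jst < ⊤ →
    ∀ i₁ i₂ : ℕ, 8 ≤ i₁ → i₁ ≤ i₂ →
    ∀ ℛ : Set DSq, (∀ Q ∈ ℛ, i₁ ≤ Q.idx ∧ Q.idx ≤ i₂ ∧ Q ∈ badSq θ μ Jst Q.idx) →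
    ∀ R : Set E2, R = ⋃ Q ∈ ℛ, closure (Q.enl θ μ 5) →
      μH[1] (frontier R) ≤ ENNReal.ofReal (c / θ ^ 3) * μH[1] (Jst ∩ R) ∧
      ∃ ΓR : Set E2, frontier R ⊆ ΓR ∧ FinSegUnion ΓR ∧
        μH[1] ΓR ≤ ENNReal.ofReal (c / θ ^ 3) * μH[1] (Jst ∩ R) ∧
        ∀ x ∈ R, IsConnected (ΓR ∩ connectedComponentIn R x) := by
  refine ⟨160, 1 / 2, by norm_num, by norm_num, ?_⟩
  intro n₀ θ hθn hθ μ hμ J hJ hJfin i₁ i₂ _ _ ℛ hℛ R hR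
  have hθ₀ : 0 < θ := hθn ▸ by positivity
  have hθ₁ : θ < 1 := by linarith
  set 𝒩 := essentialPart DSq.idx (DSq.closedEnl θ μ 5) ℛ
  have hbad : ∀ Q ∈ 𝒩, Q ∈ badSq θ μ J Q.idx := fun Q hQ => (hℛ Q hQ.1).2.2
  have hover := DSq.boundedOverlap_essentialPart hθ₀ hθ hμ ℛ
  have hfin : 𝒩.Finite := (hover.mono subset_rfl fun _ _ => inter_subset_right).finite _
    (fun Q _ => hJ.inter isOpen_openCube.measurableSet) (by positivity)
    (fun Q hQ => DSq.ofReal_le_of_mem_badSq hθ₀.le hθ₁.le hμ.le (hbad Q hQ) (hℛ Q hQ.1).2.1)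
    hJfin.ne fun _ _ => inter_subset_left
  have hRN : R = ⋃ Q ∈ 𝒩, Q.closedEnl θ μ 5 := by
    rw [hR, biUnion_essentialPart]
    simp_rw [DSq.closure_enl hθ₀ hμ (by norm_num : (0 : ℝ) < 5)]
  have hfront : frontier R ⊆ ⋃ Q ∈ 𝒩, frontier (Q.closedEnl θ μ 5) := hRN ▸
    frontier_biUnion_subset_of_isClosed (hfin.isClosed_biUnion fun _ _ => isClosed_closedCube)
  have hΓ := hRN ▸ DSq.hausdorffMeasure_biUnion_frontier_closedEnl_le hθ₀ hμ hJ hfin hbad hover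
  refine ⟨(measure_mono hfront).trans hΓ, _, hfront,
    hfin.finSegUnion_biUnion fun Q _ => finSegUnion_frontier_closedCube ?_, hΓ, fun x hx => ?_⟩
  · exact mul_pos (by norm_num) (Q.sc_pos hθ₀ hμ)
  rw [hRN] at hx ⊢
  exact isConnected_biUnion_inter_connectedComponentIn hfin (fun _ _ => isClosed_closedCube)
    (fun _ _ => convex_closedCube.isPreconnected)
    (fun Q _ => isConnected_frontier_closedCube (mul_pos (by norm_num) (Q.sc_pos hθ₀ hμ)))
    (fun _ _ => isClosed_closedCube.frontier_subset)
    (fun P hP Q hQ => DSq.frontier_closedEnl_inter_nonempty hθ₀ hθ₁ hμ (by norm_num) hP hQ) hx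
end
end

section
/- Estimates for infinitesimal rigid motions on measurable sets (Lemma 4.2). Let q ∈ [1,∞). There is a constant c = c(q) > 0 such that for every Borel set E ⊆ ℝ², every skew-symmetric A ∈ ℝ^{2×2} and every b ∈ ℝ², with a(x) = A·x + b, the following hold: (i) |E|^{1/2 + 1/q}·|A| ≤ c·‖a‖_{L^q(E)} and |E|^{1/2}·|A| ≤ c·sup_{x∈E} |A·x + b|; (ii) |E|^{1/2 + 1/q}·|A·x + b| ≤ c·d(E)·‖a‖_{L^q(E)} for every x ∈ E. -/
/-!
A skew-symmetric `2 × 2` matrix is `ω J` with `J` the rotation by a right angle, so for `ω ≠ 0`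
the rigid motion is `a(x) = ω J (x - x₀)`: its norm is `|ω|` times the distance to the centre `x₀`,
and `a` is `|ω|`-Lipschitz. Part (i) is therefore a statement about the distance to a point. For
the `L^q` bound, the disc around `x₀` of area `|E| / 2` leaves half of `E` at distance at least
`√(|E| / 2π)` from `x₀`; for the sup bound, `E` lies in the disc of radius `sup_E dist(·, x₀)`.
Both arguments only use that discs of radius `r` have area `π r²`, so they hold for any measure
with `μ (closedBall x₀ r) ≤ K r^d`. For (ii), `|a(x)| ≤ |a(y)| + |ω| d(E)` for `y ∈ E`; taking
`L^q(E)` norms and using (i) together with `|E|^{1/2} ≤ 2 d(E)` gives the bound.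
-/

open MeasureTheory Set
open scoped ENNReal NNReal

noncomputable section

/-- Frobenius norm of a `2 × 2` real matrix. -/
def matNorm (A : Matrix (Fin 2) (Fin 2) ℝ) : ℝ :=
  Real.sqrt (∑ i : Fin 2, ∑ j : Fin 2, (A i j) ^ 2)

/-- The infinitesimal rigid motion `a_{A,b} : x ↦ A x + b`. -/
def rigid (A : Matrix (Fin 2) (Fin 2) ℝ) (b : E2) : E2 → E2 :=
  fun x => Matrix.toEuclideanLin A x + b

section BallGrowth

variable {α : Type*} [PseudoMetricSpace α] [MeasurableSpace α]
  {μ : Measure α} {x₀ : α} {s : Set α} {K d q : ℝ}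

theorem measure_rpow_le_mul_iSup_edist (hK : 0 < K) (hd : 0 < d)
    (hball : ∀ r, 0 ≤ r → μ (Metric.closedBall x₀ r) ≤ ENNReal.ofReal (K * r ^ d)) :
    μ s ^ (1 / d) ≤ ENNReal.ofReal (K ^ (1 / d)) * ⨆ x ∈ s, edist x x₀ := by
  set S := ⨆ x ∈ s, edist x x₀
  rcases eq_or_ne S ⊤ with hS | hS
  · rw [hS, ENNReal.mul_top (ENNReal.ofReal_pos.2 (by positivity)).ne']
    exact le_top
  have hsub : s ⊆ Metric.closedBall x₀ S.toReal := fun x hx => by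
    rw [Metric.mem_closedBall, ← ENNReal.ofReal_le_iff_le_toReal hS, ← edist_dist]
    exact le_biSup (fun x => edist x x₀) hx
  calc μ s ^ (1 / d) ≤ ENNReal.ofReal (K * S.toReal ^ d) ^ (1 / d) := by
        gcongr
        exact (measure_mono hsub).trans (hball _ ENNReal.toReal_nonneg)
    _ = ENNReal.ofReal (K ^ (1 / d)) * S := by
        rw [ENNReal.ofReal_rpow_of_nonneg (by positivity) (by positivity),
          Real.mul_rpow hK.le (by positivity), ← Real.rpow_mul ENNReal.toReal_nonneg,
          mul_one_div_cancel hd.ne', Real.rpow_one, ENNReal.ofReal_mul (by positivity),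
          ENNReal.ofReal_toReal hS]

theorem measure_le_measure_diff_ball_add
    (hball : ∀ r, 0 ≤ r → μ (Metric.closedBall x₀ r) ≤ ENNReal.ofReal (K * r ^ d)) {r : ℝ}
    (hr : 0 ≤ r) : μ s ≤ μ (s \ Metric.ball x₀ r) + ENNReal.ofReal (K * r ^ d) :=
  (measure_le_inter_add_sdiff μ s (Metric.ball x₀ r)).trans <| by
    rw [add_comm]
    gcongr
    exact (measure_mono (Set.inter_subset_right.trans Metric.ball_subset_closedBall)).trans
      (hball r hr)

variable [OpensMeasurableSpace α]

theorem ofReal_mul_measure_diff_ball_rpow_le_eLpNorm_dist (hq : 0 < q) (r : ℝ) :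
    ENNReal.ofReal r * μ (s \ Metric.ball x₀ r) ^ (1 / q) ≤
      eLpNorm (fun x => dist x x₀) (ENNReal.ofReal q) (μ.restrict s) := by
  have hp : ENNReal.ofReal q ≠ 0 := by simpa using hq
  have hmarkov := pow_mul_meas_ge_le_eLpNorm (μ.restrict s) hp ENNReal.ofReal_ne_top
    (continuous_id.dist (continuous_const (y := x₀))).aestronglyMeasurable (ENNReal.ofReal r ^ q)
  rw [ENNReal.toReal_ofReal hq.le] at hmarkov
  have hsub : s \ Metric.ball x₀ r ⊆ {x | ENNReal.ofReal r ^ q ≤ ‖dist x x₀‖ₑ ^ q} ∩ s := by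
    intro x hx
    have hr : r ≤ dist x x₀ := not_lt.1 hx.2
    refine ⟨?_, hx.1⟩
    simp only [Set.mem_ofPred_eq, Real.enorm_eq_ofReal dist_nonneg]
    gcongr
  calc ENNReal.ofReal r * μ (s \ Metric.ball x₀ r) ^ (1 / q)
      = (ENNReal.ofReal r ^ q * μ (s \ Metric.ball x₀ r)) ^ (1 / q) := by
        rw [ENNReal.mul_rpow_of_nonneg _ _ (by positivity), ← ENNReal.rpow_mul,
          mul_one_div_cancel hq.ne', ENNReal.rpow_one]
    _ ≤ (ENNReal.ofReal r ^ q *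
          μ.restrict s {x | ENNReal.ofReal r ^ q ≤ ‖dist x x₀‖ₑ ^ q}) ^ (1 / q) := by
        gcongr (_ * ?_) ^ _
        exact (measure_mono hsub).trans (Measure.le_restrict_apply _ _)
    _ ≤ _ := hmarkov

theorem eLpNorm_dist_eq_top_of_measure_eq_top (hq : 0 < q)
    (hball : ∀ r, 0 ≤ r → μ (Metric.closedBall x₀ r) ≤ ENNReal.ofReal (K * r ^ d))
    (hs : μ s = ⊤) : eLpNorm (fun x => dist x x₀) (ENNReal.ofReal q) (μ.restrict s) = ⊤ := by
  have hdiff : μ (s \ Metric.ball x₀ 1) = ⊤ := by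
    simpa [hs] using measure_le_measure_diff_ball_add (s := s) hball zero_le_one
  have := ofReal_mul_measure_diff_ball_rpow_le_eLpNorm_dist (μ := μ) (s := s) (x₀ := x₀) hq 1
  rwa [hdiff, ENNReal.top_rpow_of_pos (by positivity), ENNReal.ofReal_one, one_mul,
    top_le_iff] at this

theorem measure_rpow_le_mul_eLpNorm_dist (hK : 0 < K) (hd : 0 < d) (hq : 0 < q)
    (hball : ∀ r, 0 ≤ r → μ (Metric.closedBall x₀ r) ≤ ENNReal.ofReal (K * r ^ d)) :
    μ s ^ (1 / d + 1 / q) ≤ ENNReal.ofReal ((2 * K) ^ (1 / d) * 2 ^ (1 / q)) *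
      eLpNorm (fun x => dist x x₀) (ENNReal.ofReal q) (μ.restrict s) := by
  rcases eq_or_ne (μ s) 0 with h0 | h0
  · rw [h0, ENNReal.zero_rpow_of_pos (by positivity)]
    exact zero_le
  rcases eq_or_ne (μ s) ⊤ with htop | htop
  · rw [eLpNorm_dist_eq_top_of_measure_eq_top hq hball htop,
      ENNReal.mul_top (ENNReal.ofReal_pos.2 (by positivity)).ne']
    exact le_top
  set N := eLpNorm (fun x => dist x x₀) (ENNReal.ofReal q) (μ.restrict s)
  set m := (μ s).toReal
  have hm : 0 < m := ENNReal.toReal_pos h0 htop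
  -- By the growth bound, `ball x₀ r` carries at most half the mass of `s`.
  set r := (m / (2 * K)) ^ (1 / d)
  have hr : K * r ^ d = m / 2 := by
    rw [← Real.rpow_mul (by positivity), one_div_mul_cancel hd.ne', Real.rpow_one]
    field_simp
  have hhalf : ENNReal.ofReal (m / 2) ≤ μ (s \ Metric.ball x₀ r) := by
    have hμ : μ s = ENNReal.ofReal (m / 2) + ENNReal.ofReal (m / 2) := by
      rw [← ENNReal.ofReal_add (by positivity) (by positivity), add_halves,
        ENNReal.ofReal_toReal htop]
    have := measure_le_measure_diff_ball_add (s := s) hball (r := r) (by positivity)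
    rw [hμ, hr] at this
    exact (ENNReal.add_le_add_iff_right ENNReal.ofReal_ne_top).1 this
  have hN : ENNReal.ofReal (r * (m / 2) ^ (1 / q)) ≤ N := by
    calc ENNReal.ofReal (r * (m / 2) ^ (1 / q))
        = ENNReal.ofReal r * ENNReal.ofReal (m / 2) ^ (1 / q) := by
          rw [ENNReal.ofReal_mul (by positivity),
            ENNReal.ofReal_rpow_of_nonneg (by positivity) (by positivity)]
      _ ≤ ENNReal.ofReal r * μ (s \ Metric.ball x₀ r) ^ (1 / q) := by gcongr
      _ ≤ N := ofReal_mul_measure_diff_ball_rpow_le_eLpNorm_dist hq r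
  have hconst :
      m ^ (1 / d + 1 / q) = (2 * K) ^ (1 / d) * 2 ^ (1 / q) * (r * (m / 2) ^ (1 / q)) := by
    rw [mul_mul_mul_comm, ← Real.mul_rpow (by positivity) (by positivity),
      ← Real.mul_rpow (by positivity) (by positivity), Real.rpow_add hm]
    congr 2 <;> field_simp
  calc μ s ^ (1 / d + 1 / q) = ENNReal.ofReal (m ^ (1 / d + 1 / q)) := by
        rw [← ENNReal.ofReal_rpow_of_nonneg hm.le (by positivity), ENNReal.ofReal_toReal htop]
    _ ≤ _ := by
        rw [hconst, ENNReal.ofReal_mul (by positivity)]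
        gcongr

end BallGrowth

theorem Matrix.exists_eq_of_transpose_eq_neg_fin_two {R : Type*} [CommRing R] [IsAddTorsionFree R]
    {A : Matrix (Fin 2) (Fin 2) R} (hA : Matrix.transpose A = -A) : ∃ ω, A = !![0, -ω; ω, 0] := by
  have h : ∀ i j, A j i = -A i j := fun i j => congrFun (congrFun hA i) j
  refine ⟨A 1 0, Matrix.ext fun i j => ?_⟩
  fin_cases i <;> fin_cases j
  · simpa using self_eq_neg.1 (h 0 0)
  · simpa using h 1 0
  · simp
  · simpa using self_eq_neg.1 (h 1 1)

theorem matNorm_skew (ω : ℝ) : matNorm !![0, -ω; ω, 0] = √2 * |ω| := by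
  rw [matNorm, ← Real.sqrt_sq_eq_abs ω, ← Real.sqrt_mul zero_le_two]
  congr 1
  simp [Fin.sum_univ_two, two_mul]

theorem norm_toEuclideanLin_skew (ω : ℝ) (v : E2) :
    ‖Matrix.toEuclideanLin !![0, -ω; ω, 0] v‖ = |ω| * ‖v‖ := by
  rw [EuclideanSpace.norm_eq, EuclideanSpace.norm_eq, ← Real.sqrt_sq_eq_abs ω,
    ← Real.sqrt_mul (sq_nonneg _)]
  congr 1
  simp [Matrix.toLpLin_apply, Fin.sum_univ_two, Matrix.vecHead, Matrix.vecTail, mul_add, mul_pow,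
    add_comm (ω ^ 2 * v 0 ^ 2)]

theorem dist_rigid_skew (ω : ℝ) (b x y : E2) :
    dist (rigid !![0, -ω; ω, 0] b x) (rigid !![0, -ω; ω, 0] b y) = |ω| * dist x y := by
  simp only [dist_eq_norm, rigid, add_sub_add_right_eq_sub, ← map_sub, norm_toEuclideanLin_skew]

theorem exists_norm_rigid_skew_eq_mul_dist {ω : ℝ} (hω : ω ≠ 0) (b : E2) :
    ∃ x₀, ∀ x, ‖rigid !![0, -ω; ω, 0] b x‖ = |ω| * dist x x₀ := by
  have hinj : Function.Injective (Matrix.toEuclideanLin !![0, -ω; ω, 0]) := by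
    refine (injective_iff_map_eq_zero _).2 fun v hv => ?_
    simpa [hω, norm_toEuclideanLin_skew] using congrArg norm hv
  obtain ⟨x₀, hx₀⟩ := LinearMap.injective_iff_surjective.1 hinj (-b)
  refine ⟨x₀, fun x => ?_⟩
  have hzero : rigid !![0, -ω; ω, 0] b x₀ = 0 := by simp [rigid, hx₀]
  rw [← dist_rigid_skew, hzero, dist_zero_right]

namespace E2

theorem volume_closedBall (x : E2) {r : ℝ} (hr : 0 ≤ r) :
    volume (Metric.closedBall x r) = ENNReal.ofReal (Real.pi * r ^ (2 : ℝ)) := by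
  rw [EuclideanSpace.volume_closedBall_fin_two, Real.rpow_two, ← ENNReal.ofReal_pow hr,
    ← ENNReal.ofReal_mul' Real.pi_pos.le, mul_comm]

theorem volume_rpow_le_mul_eLpNorm_dist {q : ℝ} (hq : 1 ≤ q) (s : Set E2) (x₀ : E2) :
    volume s ^ ((1 : ℝ) / 2 + 1 / q) ≤
      6 * eLpNorm (fun x => dist x x₀) (ENNReal.ofReal q) (volume.restrict s) := by
  refine (measure_rpow_le_mul_eLpNorm_dist Real.pi_pos two_pos (by linarith)
    fun r hr => (volume_closedBall x₀ hr).le).trans ?_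
  have h2π : (2 * Real.pi) ^ ((1 : ℝ) / 2) ≤ 3 := by
    rw [← Real.sqrt_eq_rpow, Real.sqrt_le_left zero_le_three]
    nlinarith [Real.pi_le_four]
  have h2 : (2 : ℝ) ^ (1 / q) ≤ 2 := by
    simpa using Real.rpow_le_rpow_of_exponent_le one_le_two ((div_le_one (by linarith)).2 hq)
  rw [← ENNReal.ofReal_ofNat 6]
  gcongr
  calc (2 * Real.pi) ^ ((1 : ℝ) / 2) * 2 ^ (1 / q) ≤ 3 * 2 := by gcongr
    _ = 6 := by norm_num

theorem volume_sqrt_le_mul_iSup_edist (s : Set E2) (x₀ : E2) :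
    volume s ^ ((1 : ℝ) / 2) ≤ 2 * ⨆ x ∈ s, edist x x₀ := by
  refine (measure_rpow_le_mul_iSup_edist Real.pi_pos two_pos
    fun r hr => (volume_closedBall x₀ hr).le).trans ?_
  gcongr
  refine (ENNReal.ofReal_le_ofReal ?_).trans_eq (ENNReal.ofReal_ofNat 2)
  rw [← Real.sqrt_eq_rpow, Real.sqrt_le_left zero_le_two]
  nlinarith [Real.pi_le_four]

end E2

theorem enorm_mul_measure_rpow_le_eLpNorm_add {α F : Type*} [PseudoEMetricSpace α]
    [MeasurableSpace α] [NormedAddCommGroup F] {μ : Measure α} {p : ℝ≥0∞} (hp : 1 ≤ p)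
    (hp_top : p ≠ ⊤) {g : α → F} {L : ℝ≥0} {s : Set α} (hs : MeasurableSet s)
    (hg : LipschitzOnWith L g s) (hgm : AEStronglyMeasurable g (μ.restrict s)) {x : α}
    (hx : x ∈ s) :
    ‖g x‖ₑ * μ s ^ (1 / p.toReal) ≤
      eLpNorm g p (μ.restrict s) + μ s ^ (1 / p.toReal) * (L * Metric.ediam s) := by
  have hp0 : p ≠ 0 := (zero_lt_one.trans_le hp).ne'
  have hdev : eLpNorm (fun y => g x - g y) p (μ.restrict s) ≤
      μ s ^ (1 / p.toReal) * (L * Metric.ediam s) := by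
    refine (eLpNorm_mono_enorm_ae (g := fun _ => (L : ℝ≥0∞) * Metric.ediam s) ?_).trans_eq ?_
    · filter_upwards [ae_restrict_mem hs] with y hy
      rw [← edist_eq_enorm_sub, enorm_eq_self]
      exact (hg hx hy).trans (by gcongr; exact Metric.edist_le_ediam_of_mem hx hy)
    · rw [eLpNorm_const' _ hp0 hp_top, Measure.restrict_apply_univ, enorm_eq_self, mul_comm]
  calc ‖g x‖ₑ * μ s ^ (1 / p.toReal) = eLpNorm (g + fun y => g x - g y) p (μ.restrict s) := by
        have hsum : (g + fun y => g x - g y) = fun _ => g x :=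
          funext fun y => add_sub_cancel (g y) (g x)
        rw [hsum, eLpNorm_const' _ hp0 hp_top, Measure.restrict_apply_univ]
    _ ≤ eLpNorm g p (μ.restrict s) + eLpNorm (fun y => g x - g y) p (μ.restrict s) :=
        eLpNorm_add_le hgm (aestronglyMeasurable_const.sub hgm) hp
    _ ≤ _ := by gcongr

theorem volume_rpow_mul_le_eLpNorm_rigid_skew {q : ℝ} (hq : 1 ≤ q) (ω : ℝ) (b : E2)
    (E : Set E2) :
    volume E ^ ((1 : ℝ) / 2 + 1 / q) * ENNReal.ofReal |ω| ≤
      6 * eLpNorm (rigid !![0, -ω; ω, 0] b) (ENNReal.ofReal q) (volume.restrict E) := by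
  rcases eq_or_ne ω 0 with rfl | hω
  · simp
  obtain ⟨x₀, hx₀⟩ := exists_norm_rigid_skew_eq_mul_dist hω b
  have hnorm : eLpNorm (rigid !![0, -ω; ω, 0] b) (ENNReal.ofReal q) (volume.restrict E) =
      ENNReal.ofReal |ω| * eLpNorm (fun x => dist x x₀) (ENNReal.ofReal q) (volume.restrict E) := by
    rw [← Real.enorm_eq_ofReal_abs, ← eLpNorm_const_smul]
    refine eLpNorm_congr_norm_ae (ae_of_all _ fun x => ?_)
    simp [hx₀, abs_of_nonneg dist_nonneg]
  rw [hnorm, mul_left_comm, mul_comm]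
  gcongr
  exact E2.volume_rpow_le_mul_eLpNorm_dist hq E x₀

theorem volume_sqrt_mul_le_iSup_rigid_skew (ω : ℝ) (b : E2) (E : Set E2) :
    volume E ^ ((1 : ℝ) / 2) * ENNReal.ofReal |ω| ≤
      2 * ⨆ x ∈ E, ENNReal.ofReal ‖rigid !![0, -ω; ω, 0] b x‖ := by
  rcases eq_or_ne ω 0 with rfl | hω
  · simp
  obtain ⟨x₀, hx₀⟩ := exists_norm_rigid_skew_eq_mul_dist hω b
  calc volume E ^ ((1 : ℝ) / 2) * ENNReal.ofReal |ω|
      ≤ (2 * ⨆ x ∈ E, edist x x₀) * ENNReal.ofReal |ω| := by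
        gcongr
        exact E2.volume_sqrt_le_mul_iSup_edist E x₀
    _ = 2 * ⨆ x ∈ E, ENNReal.ofReal ‖rigid !![0, -ω; ω, 0] b x‖ := by
        rw [mul_assoc]
        simp_rw [ENNReal.iSup_mul, hx₀, edist_dist, ENNReal.ofReal_mul (abs_nonneg ω), mul_comm]

theorem volume_rpow_mul_norm_rigid_skew_le {q : ℝ} (hq : 1 ≤ q) (ω : ℝ) (b : E2) {E : Set E2}
    (hE : MeasurableSet E) {x : E2} (hx : x ∈ E) :
    volume E ^ ((1 : ℝ) / 2 + 1 / q) * ENNReal.ofReal ‖rigid !![0, -ω; ω, 0] b x‖ ≤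
      8 * Metric.ediam E *
        eLpNorm (rigid !![0, -ω; ω, 0] b) (ENNReal.ofReal q) (volume.restrict E) := by
  set a := rigid !![0, -ω; ω, 0] b
  set N := eLpNorm a (ENNReal.ofReal q) (volume.restrict E)
  have hlip : LipschitzWith ‖ω‖₊ a :=
    LipschitzWith.of_dist_le_mul fun x y => (dist_rigid_skew ω b x y).le
  have hpoint := enorm_mul_measure_rpow_le_eLpNorm_add (μ := volume) (p := ENNReal.ofReal q)
    (by simpa using hq) ENNReal.ofReal_ne_top hE hlip.lipschitzOnWith
    hlip.continuous.aestronglyMeasurable hx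
  rw [ENNReal.toReal_ofReal (by linarith)] at hpoint
  have hsqrt : volume E ^ ((1 : ℝ) / 2) ≤ 2 * Metric.ediam E :=
    (E2.volume_sqrt_le_mul_iSup_edist E x).trans <| by
      gcongr
      exact iSup₂_le fun y hy => Metric.edist_le_ediam_of_mem hy hx
  have hsplit := ENNReal.rpow_add_of_nonneg (x := volume E) ((1 : ℝ) / 2) (1 / q) (by norm_num)
    (by positivity)
  calc volume E ^ ((1 : ℝ) / 2 + 1 / q) * ENNReal.ofReal ‖a x‖
      = volume E ^ ((1 : ℝ) / 2) * (‖a x‖ₑ * volume E ^ (1 / q)) := by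
        rw [hsplit, ofReal_norm]
        ring
    _ ≤ volume E ^ ((1 : ℝ) / 2) * (N + volume E ^ (1 / q) * (‖ω‖₊ * Metric.ediam E)) := by
        gcongr
    _ = volume E ^ ((1 : ℝ) / 2) * N +
          Metric.ediam E * (volume E ^ ((1 : ℝ) / 2 + 1 / q) * ENNReal.ofReal |ω|) := by
        rw [hsplit, ← Real.enorm_eq_ofReal_abs, enorm_eq_nnnorm]
        ring
    _ ≤ 2 * Metric.ediam E * N + Metric.ediam E * (6 * N) := by
        gcongr ?_ * _ + _ * ?_
        exact volume_rpow_mul_le_eLpNorm_rigid_skew hq ω b E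
    _ = 8 * Metric.ediam E * N := by ring

/-- **Estimates for infinitesimal rigid motions on measurable sets** (Lemma 4.2). -/
theorem rigid_motion_estimates (q : ℝ) (hq : 1 ≤ q) :
    ∃ c : ℝ, 0 < c ∧
      ∀ E : Set E2, MeasurableSet E →
      ∀ A : Matrix (Fin 2) (Fin 2) ℝ, Matrix.transpose A = -A → ∀ b : E2,
        ((volume E) ^ ((1 : ℝ) / 2 + 1 / q) * ENNReal.ofReal (matNorm A) ≤
          ENNReal.ofReal c *
            eLpNorm (rigid A b) (ENNReal.ofReal q) (volume.restrict E)) ∧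
        ((volume E) ^ ((1 : ℝ) / 2) * ENNReal.ofReal (matNorm A) ≤
          ENNReal.ofReal c * ⨆ x ∈ E, ENNReal.ofReal ‖rigid A b x‖) ∧
        (∀ x ∈ E,
          (volume E) ^ ((1 : ℝ) / 2 + 1 / q) * ENNReal.ofReal ‖rigid A b x‖ ≤
            ENNReal.ofReal c * EMetric.diam E *
              eLpNorm (rigid A b) (ENNReal.ofReal q) (volume.restrict E)) := by
  refine ⟨12, by norm_num, fun E hE A hA b => ?_⟩
  obtain ⟨ω, rfl⟩ := Matrix.exists_eq_of_transpose_eq_neg_fin_two hA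
  have hmatNorm : ENNReal.ofReal (matNorm !![0, -ω; ω, 0]) ≤ 2 * ENNReal.ofReal |ω| := by
    rw [matNorm_skew, ENNReal.ofReal_mul (by positivity)]
    gcongr
    refine (ENNReal.ofReal_le_ofReal ?_).trans_eq (ENNReal.ofReal_ofNat 2)
    rw [Real.sqrt_le_left zero_le_two]
    norm_num
  rw [ENNReal.ofReal_ofNat]
  refine ⟨?_, ?_, fun x hx => ?_⟩
  · calc _ ≤ volume E ^ ((1 : ℝ) / 2 + 1 / q) * (2 * ENNReal.ofReal |ω|) := by gcongr
      _ ≤ 2 * (6 * eLpNorm (rigid !![0, -ω; ω, 0] b) (ENNReal.ofReal q) (volume.restrict E)) := by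
        rw [mul_left_comm]
        gcongr 2 * ?_
        exact volume_rpow_mul_le_eLpNorm_rigid_skew hq ω b E
      _ = _ := by ring
  · calc _ ≤ volume E ^ ((1 : ℝ) / 2) * (2 * ENNReal.ofReal |ω|) := by gcongr
      _ ≤ 2 * (2 * ⨆ x ∈ E, ENNReal.ofReal ‖rigid !![0, -ω; ω, 0] b x‖) := by
        rw [mul_left_comm]
        gcongr 2 * ?_
        exact volume_sqrt_mul_le_iSup_rigid_skew ω b E
      _ ≤ _ := by
        rw [← mul_assoc]
        gcongr
        norm_num
  · refine (volume_rpow_mul_norm_rigid_skew_le hq ω b hE hx).trans ?_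
    gcongr
    · norm_num
    · -- `EMetric.diam` is a deprecated alias of `Metric.ediam`
      exact le_rfl
end
end

section
/- L^q norm of an infinitesimal rigid motion on a square is controlled by its L^q norm on a subset (Lemma 4.3). Let q ∈ [1,∞). There is a constant c = c(q) > 0 such that for every y ∈ ℝ², every R > 0, every Borel set E ⊆ Q_R^y := y + (−R,R)², every skew-symmetric A ∈ ℝ^{2×2} and every b ∈ ℝ², with a(x) = A·x + b, one has |E|^{1/2 + 1/q}·‖a‖_{L^q(Q_R^y)} ≤ c·R^{1 + 2/q}·‖a‖_{L^q(E)} (equivalently, ‖a‖_{L^q(Q_R^y)} ≤ c·(R²·|E|^{−1})^{1/2 + 1/q}·‖a‖_{L^q(E)} whenever |E| > 0). -/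
open MeasureTheory Set
open scoped ENNReal NNReal

noncomputable section

/-- The open square `Q_R^y = y + (-R, R)²`. -/
def QsqAt (y : E2) (R : ℝ) : Set E2 := {x | ∀ i : Fin 2, |x i - y i| < R}

/-! For skew-symmetric `A ∈ ℝ^{2×2}` the motion `a = a_{A,b}` multiplies all distances by
`ω = |A₀₁|`. Fix `x` in a ball of radius `D` containing `E` and put `m = |a x|`. Either
`2 D ω ≤ m`, and then `|a| ≥ m / 2` on the whole ball, or `ω > 0` and the sublevel set
`{|a| < s m}` lies in a disc of radius `2 s m / ω < 4 s D`. With `s = √|E| / (16 D)` the set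
`{|a| ≥ s m}` therefore covers at least half of `E`, and Chebyshev's inequality gives
`|E|^{1/2 + 1/q} m ≲ D ‖a‖_{L^q(E)}`. Integrating this over the square gives the claim. -/

open Metric Real
open scoped Matrix

theorem mul_meas_ge_rpow_le_eLpNorm {α F : Type*} [MeasurableSpace α] [NormedAddCommGroup F]
    {μ : Measure α} {f : α → F} {p : ℝ≥0∞} (hp0 : p ≠ 0) (hptop : p ≠ ∞)
    (hf : AEStronglyMeasurable f μ) (ε : ℝ≥0∞) :
    ε * μ {x | ε ≤ ‖f x‖ₑ} ^ p.toReal⁻¹ ≤ eLpNorm f p μ := by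
  have hp : 0 < p.toReal := ENNReal.toReal_pos hp0 hptop
  have h := ENNReal.rpow_le_rpow (mul_meas_ge_le_pow_eLpNorm' μ hp0 hptop hf ε)
    (inv_nonneg.2 hp.le)
  rwa [ENNReal.mul_rpow_of_nonneg _ _ (inv_nonneg.2 hp.le), ENNReal.rpow_rpow_inv hp.ne',
    ENNReal.rpow_rpow_inv hp.ne'] at h

theorem mul_eLpNorm_restrict_le_of_forall_mem {α F : Type*} [MeasurableSpace α]
    [NormedAddCommGroup F] {μ : Measure α} {f : α → F} {p : ℝ≥0∞} {S : Set α} {c C : ℝ≥0∞}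
    (hS : MeasurableSet S) (hc : c ≠ ∞) (h : ∀ x ∈ S, c * ‖f x‖ₑ ≤ C) :
    c * eLpNorm f p (μ.restrict S) ≤ C * μ S ^ p.toReal⁻¹ := by
  rcases eq_or_ne c 0 with rfl | hc0
  · simp
  have hbound : ∀ᵐ x ∂μ.restrict S, ‖f x‖ₑ ≤ C / c :=
    ae_restrict_of_forall_mem hS fun x hx =>
      (ENNReal.le_div_iff_mul_le (.inl hc0) (.inl hc)).2 (mul_comm c _ ▸ h x hx)
  calc c * eLpNorm f p (μ.restrict S) ≤ c * (C / c * μ S ^ p.toReal⁻¹) := by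
        gcongr
        simpa using eLpNorm_le_of_ae_enorm_bound hbound
    _ = C * μ S ^ p.toReal⁻¹ := by rw [← mul_assoc, ENNReal.mul_div_cancel hc0 hc]

section Similarity

variable {F : Type*} [NormedAddCommGroup F] {f : E2 → F} {ω : ℝ≥0}

theorem volume_setOf_norm_lt_le (hf : ∀ z w, dist (f z) (f w) = ω * dist z w) (hω : 0 < ω)
    (t : ℝ) : volume {z | ‖f z‖ < t} ≤ ENNReal.ofReal (2 * t / ω) ^ 2 * ENNReal.ofReal π := by
  rcases eq_empty_or_nonempty {z | ‖f z‖ < t} with h | ⟨z₀, hz₀⟩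
  · simp [h]
  rw [← EuclideanSpace.volume_ball_fin_two z₀]
  refine measure_mono fun z hz => ?_
  rw [mem_ball, lt_div_iff₀ (by positivity), mul_comm, ← hf]
  calc dist (f z) (f z₀) ≤ ‖f z‖ + ‖f z₀‖ := dist_le_norm_add_norm _ _
    _ < 2 * t := by linarith [hz.out, hz₀.out]

theorem volume_closedBall_inter_setOf_norm_lt_le (hf : ∀ z w, dist (f z) (f w) = ω * dist z w)
    (x : E2) (D : ℝ) {s : ℝ} (hs0 : 0 ≤ s) (hs : s ≤ 1 / 2) :
    volume (closedBall x D ∩ {z | ‖f z‖ < s * ‖f x‖}) ≤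
      ENNReal.ofReal (4 * s * D) ^ 2 * ENNReal.ofReal π := by
  rcases le_or_gt (2 * D * ω) ‖f x‖ with hslow | hfast
  · -- `f` stays above `‖f x‖ / 2` on the ball
    suffices closedBall x D ∩ {z | ‖f z‖ < s * ‖f x‖} = ∅ by simp [this]
    refine eq_empty_of_forall_notMem fun z ⟨hzD, hz⟩ => ?_
    have hdist : ‖f x‖ - ‖f z‖ ≤ ω * dist z x := by
      rw [← hf]; exact (norm_sub_norm_le _ _).trans_eq (dist_eq_norm' _ _).symm
    have hzD' : dist z x ≤ D := hzD
    nlinarith [mul_le_mul_of_nonneg_left hzD' ω.coe_nonneg, hz.out,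
      mul_nonneg (sub_nonneg.2 hs) (norm_nonneg (f x))]
  · have hω : 0 < ω := by
      by_contra! h
      have hω0 : (ω : ℝ) = 0 := by simpa using h
      rw [hω0, mul_zero] at hfast
      exact (norm_nonneg _).not_gt hfast
    calc _ ≤ volume {z | ‖f z‖ < s * ‖f x‖} := measure_mono inter_subset_right
      _ ≤ ENNReal.ofReal (2 * (s * ‖f x‖) / ω) ^ 2 * ENNReal.ofReal π :=
        volume_setOf_norm_lt_le hf hω _
      _ ≤ ENNReal.ofReal (4 * s * D) ^ 2 * ENNReal.ofReal π := by
        gcongr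
        rw [div_le_iff₀ (by positivity)]
        nlinarith [mul_le_mul_of_nonneg_left hfast.le hs0]

theorem half_volume_le_volume_inter_setOf_le_norm (hf : ∀ z w, dist (f z) (f w) = ω * dist z w)
    {E : Set E2} {x : E2} {D : ℝ} (hD : 0 < D) (hE : E ⊆ closedBall x D) :
    volume E / 2 ≤ volume (E ∩ {z | √(volume E).toReal / (16 * D) * ‖f x‖ ≤ ‖f z‖}) := by
  have hV : volume E ≤ ENNReal.ofReal (D ^ 2 * π) := by
    calc volume E ≤ volume (closedBall x D) := measure_mono hE
      _ = ENNReal.ofReal (D ^ 2 * π) := by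
        rw [EuclideanSpace.volume_closedBall_fin_two, ← ENNReal.ofReal_pow hD.le,
          ← ENNReal.ofReal_mul (by positivity)]
  have hVtop : volume E ≠ ∞ := ne_top_of_le_ne_top ENNReal.ofReal_ne_top hV
  set V := (volume E).toReal
  set s := √V / (16 * D)
  have hs : s ≤ 1 / 2 := by
    rw [div_le_iff₀ (by positivity)]
    calc √V ≤ √(D ^ 2 * π) :=
          Real.sqrt_le_sqrt (ENNReal.toReal_le_of_le_ofReal (by positivity) hV)
      _ = D * √π := by rw [Real.sqrt_mul (sq_nonneg D), Real.sqrt_sq hD.le]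
      _ ≤ D * 2 := by
        gcongr
        rw [Real.sqrt_le_left two_pos.le]
        linarith [pi_lt_four]
      _ ≤ 1 / 2 * (16 * D) := by linarith
  have hsmall : volume (E ∩ {z | ‖f z‖ < s * ‖f x‖}) ≤ volume E / 2 := by
    calc _ ≤ volume (closedBall x D ∩ {z | ‖f z‖ < s * ‖f x‖}) :=
          measure_mono (inter_subset_inter_left _ hE)
      _ ≤ ENNReal.ofReal (4 * s * D) ^ 2 * ENNReal.ofReal π :=
          volume_closedBall_inter_setOf_norm_lt_le hf x D (by positivity) hs
      _ = ENNReal.ofReal (V * π / 16) := by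
          rw [← ENNReal.ofReal_pow (by positivity), ← ENNReal.ofReal_mul (by positivity)]
          congr 1
          simp only [s]
          field_simp
          rw [Real.sq_sqrt ENNReal.toReal_nonneg]
          ring
      _ ≤ ENNReal.ofReal (V / 2) :=
          ENNReal.ofReal_le_ofReal (by nlinarith [pi_lt_four, (ENNReal.toReal_nonneg : 0 ≤ V)])
      _ = volume E / 2 := by
          rw [ENNReal.ofReal_div_of_pos two_pos, ENNReal.ofReal_toReal hVtop, ENNReal.ofReal_ofNat]
  have hsplit : volume E ≤ volume (E ∩ {z | s * ‖f x‖ ≤ ‖f z‖}) + volume E / 2 := by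
    calc volume E
        ≤ volume (E ∩ {z | s * ‖f x‖ ≤ ‖f z‖} ∪ E ∩ {z | ‖f z‖ < s * ‖f x‖}) :=
          measure_mono fun z hz => (le_or_gt (s * ‖f x‖) ‖f z‖).imp (⟨hz, ·⟩) (⟨hz, ·⟩)
      _ ≤ _ := measure_union_le _ _
      _ ≤ _ := by gcongr
  rwa [← ENNReal.add_le_add_iff_right (ENNReal.div_ne_top hVtop two_ne_zero),
    ENNReal.add_halves]

theorem rpow_mul_enorm_le_eLpNorm_restrict (hf : ∀ z w, dist (f z) (f w) = ω * dist z w)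
    {E : Set E2} {x : E2} {D : ℝ} (hD : 0 < D) (hE : E ⊆ closedBall x D) {p : ℝ≥0∞}
    (hp0 : p ≠ 0) (hptop : p ≠ ∞) :
    volume E ^ (2⁻¹ + p.toReal⁻¹) * ‖f x‖ₑ ≤
      ENNReal.ofReal (16 * 2 ^ p.toReal⁻¹ * D) * eLpNorm f p (volume.restrict E) := by
  have hVtop : volume E ≠ ∞ := ne_top_of_le_ne_top measure_closedBall_lt_top.ne (measure_mono hE)
  set V := (volume E).toReal
  set t := √V / (16 * D) * ‖f x‖
  have hcont : Continuous f := (LipschitzWith.of_dist_le_mul fun z w => (hf z w).le).continuous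
  have hcheb :
      ENNReal.ofReal t * (volume E / 2) ^ p.toReal⁻¹ ≤ eLpNorm f p (volume.restrict E) := by
    refine le_trans ?_
      (mul_meas_ge_rpow_le_eLpNorm hp0 hptop hcont.aestronglyMeasurable (ENNReal.ofReal t))
    gcongr
    calc volume E / 2 ≤ volume (E ∩ {z | t ≤ ‖f z‖}) :=
          half_volume_le_volume_inter_setOf_le_norm hf hD hE
      _ = volume ({z | ENNReal.ofReal t ≤ ‖f z‖ₑ} ∩ E) := by
          simp only [← ofReal_norm, ENNReal.ofReal_le_ofReal_iff (norm_nonneg _),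
            inter_comm]
      _ ≤ _ := Measure.le_restrict_apply _ _
  calc volume E ^ (2⁻¹ + p.toReal⁻¹) * ‖f x‖ₑ
      = ENNReal.ofReal (16 * 2 ^ p.toReal⁻¹ * D) *
          (ENNReal.ofReal t * (volume E / 2) ^ p.toReal⁻¹) := by
        have hhalf : volume E / 2 = ENNReal.ofReal (V / 2) := by
          rw [ENNReal.ofReal_div_of_pos two_pos, ENNReal.ofReal_toReal hVtop, ENNReal.ofReal_ofNat]
        rw [hhalf, ← ENNReal.ofReal_toReal hVtop, ← ofReal_norm,
          ENNReal.ofReal_rpow_of_nonneg ENNReal.toReal_nonneg (by positivity),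
          ENNReal.ofReal_rpow_of_nonneg (by positivity) (by positivity),
          ← ENNReal.ofReal_mul (by positivity), ← ENNReal.ofReal_mul (by positivity),
          ← ENNReal.ofReal_mul (by positivity)]
        congr 1
        rw [Real.rpow_add' ENNReal.toReal_nonneg (by positivity),
          Real.div_rpow ENNReal.toReal_nonneg two_pos.le]
        simp only [t, V, Real.sqrt_eq_rpow, one_div]
        field_simp
    _ ≤ _ := by gcongr

theorem rpow_mul_eLpNorm_restrict_le (hf : ∀ z w, dist (f z) (f w) = ω * dist z w)
    {S E : Set E2} {y : E2} {r : ℝ} (hr : 0 < r)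
    (hS : MeasurableSet S) (hSr : S ⊆ closedBall y r) (hEr : E ⊆ closedBall y r) {p : ℝ≥0∞}
    (hp0 : p ≠ 0) (hptop : p ≠ ∞) :
    volume E ^ (2⁻¹ + p.toReal⁻¹) * eLpNorm f p (volume.restrict S) ≤
      ENNReal.ofReal (32 * (2 * π) ^ p.toReal⁻¹ * r ^ (1 + 2 / p.toReal)) *
        eLpNorm f p (volume.restrict E) := by
  have hVtop : volume E ≠ ∞ :=
    ne_top_of_le_ne_top measure_closedBall_lt_top.ne (measure_mono hEr)
  have hpoint : ∀ x ∈ S, volume E ^ (2⁻¹ + p.toReal⁻¹) * ‖f x‖ₑ ≤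
      ENNReal.ofReal (32 * 2 ^ p.toReal⁻¹ * r) * eLpNorm f p (volume.restrict E) := by
    intro x hx
    have hEx : E ⊆ closedBall x (2 * r) := fun z hz => by
      have hzy : dist z y ≤ r := hEr hz
      have hxy : dist x y ≤ r := hSr hx
      rw [mem_closedBall]
      linarith [dist_triangle_right z x y]
    convert rpow_mul_enorm_le_eLpNorm_restrict hf (by positivity) hEx hp0 hptop using 3
    ring
  calc volume E ^ (2⁻¹ + p.toReal⁻¹) * eLpNorm f p (volume.restrict S)
      ≤ ENNReal.ofReal (32 * 2 ^ p.toReal⁻¹ * r) * eLpNorm f p (volume.restrict E) *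
          volume S ^ p.toReal⁻¹ :=
        mul_eLpNorm_restrict_le_of_forall_mem hS
          (ENNReal.rpow_ne_top_of_nonneg (by positivity) hVtop) hpoint
    _ ≤ ENNReal.ofReal (32 * 2 ^ p.toReal⁻¹ * r) * eLpNorm f p (volume.restrict E) *
          ENNReal.ofReal (r ^ 2 * π) ^ p.toReal⁻¹ := by
        gcongr
        calc volume S ≤ volume (closedBall y r) := measure_mono hSr
          _ = ENNReal.ofReal (r ^ 2 * π) := by
            rw [EuclideanSpace.volume_closedBall_fin_two, ← ENNReal.ofReal_pow hr.le,
              ← ENNReal.ofReal_mul (by positivity)]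
    _ = ENNReal.ofReal (32 * (2 * π) ^ p.toReal⁻¹ * r ^ (1 + 2 / p.toReal)) *
          eLpNorm f p (volume.restrict E) := by
        rw [mul_right_comm, ENNReal.ofReal_rpow_of_nonneg (by positivity) (by positivity),
          ← ENNReal.ofReal_mul (by positivity)]
        congr 2
        rw [Real.mul_rpow (by positivity) pi_pos.le, Real.mul_rpow two_pos.le pi_pos.le,
          ← Real.rpow_natCast, ← Real.rpow_mul hr.le, Real.rpow_add hr, Real.rpow_one]
        push_cast
        ring_nf

end Similarity

theorem Matrix.norm_toEuclideanLin_of_transpose_eq_neg {A : Matrix (Fin 2) (Fin 2) ℝ}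
    (hA : Aᵀ = -A) (v : E2) : ‖Matrix.toEuclideanLin A v‖ = |A 0 1| * ‖v‖ := by
  have h00 : A 0 0 = 0 := by have := congrFun (congrFun hA 0) 0; simp at this; linarith
  have h11 : A 1 1 = 0 := by have := congrFun (congrFun hA 1) 1; simp at this; linarith
  have h10 : A 1 0 = -A 0 1 := by simpa using congrFun (congrFun hA 0) 1
  rw [← sq_eq_sq₀ (norm_nonneg _) (by positivity), mul_pow, sq_abs,
    EuclideanSpace.norm_sq_eq, EuclideanSpace.norm_sq_eq]
  simp [Fin.sum_univ_two, Matrix.toLpLin_apply, h00, h11, h10]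
  ring

theorem dist_rigid {A : Matrix (Fin 2) (Fin 2) ℝ} (hA : Aᵀ = -A) (b z w : E2) :
    dist (rigid A b z) (rigid A b w) = ‖A 0 1‖₊ * dist z w := by
  rw [dist_eq_norm, dist_eq_norm, rigid, rigid, add_sub_add_right_eq_sub, ← map_sub,
    Matrix.norm_toEuclideanLin_of_transpose_eq_neg hA, coe_nnnorm, Real.norm_eq_abs]

theorem isOpen_qsqAt (y : E2) (R : ℝ) : IsOpen (QsqAt y R) := by
  rw [QsqAt, ofPred_forall]
  exact isOpen_iInter_of_finite fun i => isOpen_lt (by fun_prop) continuous_const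

theorem qsqAt_subset_closedBall (y : E2) (R : ℝ) : QsqAt y R ⊆ closedBall y (√2 * R) := by
  intro x hx
  have h0 := hx 0
  have h1 := hx 1
  have hR : 0 < R := (abs_nonneg _).trans_lt h0
  rw [mem_closedBall, EuclideanSpace.dist_eq, Fin.sum_univ_two,
    ← Real.sqrt_sq (by positivity : 0 ≤ √2 * R)]
  gcongr
  rw [mul_pow, Real.sq_sqrt two_pos.le, Real.dist_eq, Real.dist_eq, sq_abs, sq_abs]
  nlinarith [sq_abs (x 0 - y 0), sq_abs (x 1 - y 1), abs_nonneg (x 0 - y 0),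
    abs_nonneg (x 1 - y 1)]

/-- **The `L^q` norm of an infinitesimal rigid motion on a square is controlled by its
`L^q` norm on a subset** (Lemma 4.3). -/
theorem rigid_motion_Lq_square (q : ℝ) (hq : 1 ≤ q) :
    ∃ c : ℝ, 0 < c ∧
      ∀ (y : E2) (R : ℝ), 0 < R →
      ∀ E : Set E2, MeasurableSet E → E ⊆ QsqAt y R →
      ∀ A : Matrix (Fin 2) (Fin 2) ℝ, Matrix.transpose A = -A → ∀ b : E2,
        (volume E) ^ ((1 : ℝ) / 2 + 1 / q) *
            eLpNorm (rigid A b) (ENNReal.ofReal q) (volume.restrict (QsqAt y R)) ≤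
          ENNReal.ofReal (c * R ^ (1 + 2 / q)) *
            eLpNorm (rigid A b) (ENNReal.ofReal q) (volume.restrict E) := by
  have hq0 : 0 < q := by linarith
  refine ⟨32 * (2 * π) ^ q⁻¹ * √2 ^ (1 + 2 / q), by positivity,
    fun y R hR E _ hEQ A hA b => ?_⟩
  have key := rpow_mul_eLpNorm_restrict_le (dist_rigid hA b) (by positivity)
    (isOpen_qsqAt y R).measurableSet (qsqAt_subset_closedBall y R)
    (hEQ.trans (qsqAt_subset_closedBall y R)) (by simpa using hq0) ENNReal.ofReal_ne_top
  rw [ENNReal.toReal_ofReal hq0.le, Real.mul_rpow (by positivity) hR.le, ← mul_assoc] at key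
  simpa only [one_div] using key
end
end

section
/- Rigid motion estimate on a one-dimensional slice (Remark 4.2). Let q ∈ [1,∞). There is a constant c = c(q) > 0 such that for every H¹-measurable set Γ ⊆ ℝ × {0} ⊂ ℝ² with l := H¹(Γ) < ∞, every skew-symmetric A ∈ ℝ^{2×2} and every b ∈ ℝ² one has l^{q+1}·|A|^q ≤ c·∫_Γ |A·x + b|^q dH¹(x). -/
/-!
For skew `A` and `x = (t, 0)` on the axis, the second component of `A x + b` is the affine
function `a t + b₁` with `a = A₁₀`, and `|A| = √2 |a|`. An affine function of slope `a` is
smaller than `ε` only on an interval of length `2ε / |a|`; for `ε = |a| l / 4` this interval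
carries at most half of `Γ`, so `|A x + b| ≥ |a| l / 4` on a part of `Γ` of measure `≥ l / 2`.
Transporting `Γ` isometrically to `ℝ`, where `μH[1]` is Lebesgue measure, this gives the
estimate with `c = 2 (4√2)^q`.
-/

open MeasureTheory Set
open scoped ENNReal NNReal

noncomputable section

def xAxis (t : ℝ) : E2 := !₂[t, 0]

theorem isometry_xAxis : Isometry xAxis :=
  Isometry.of_dist_eq fun s t ↦ by
    simp [xAxis, EuclideanSpace.dist_eq, Real.dist_eq, Real.sqrt_sq_eq_abs]

theorem setOf_apply_one_eq_zero_subset_range_xAxis : {x : E2 | x 1 = 0} ⊆ range xAxis := by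
  intro x hx
  refine ⟨x 0, ?_⟩
  ext i
  fin_cases i
  · rfl
  · exact hx.symm

theorem Matrix.apply_eq_neg_of_transpose_eq_neg {n R : Type*} [Neg R] {A : Matrix n n R}
    (hA : Matrix.transpose A = -A) (i j : n) : A j i = -A i j :=
  congrFun (congrFun hA i) j

theorem matNorm_eq_sqrt_two_mul_abs {A : Matrix (Fin 2) (Fin 2) ℝ}
    (hA : Matrix.transpose A = -A) :
    matNorm A = √2 * |A 1 0| := by
  have h := Matrix.apply_eq_neg_of_transpose_eq_neg hA
  have h00 : A 0 0 = 0 := by linarith [h 0 0]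
  have h11 : A 1 1 = 0 := by linarith [h 1 1]
  rw [matNorm, Fin.sum_univ_two, Fin.sum_univ_two, Fin.sum_univ_two, h00, h11, h 1 0,
    ← Real.sqrt_sq_eq_abs, ← Real.sqrt_mul zero_le_two]
  ring_nf

theorem abs_mul_add_le_norm_rigid_xAxis {A : Matrix (Fin 2) (Fin 2) ℝ}
    (hA : Matrix.transpose A = -A) (b : E2) (t : ℝ) :
    |A 1 0 * t + b 1| ≤ ‖rigid A b (xAxis t)‖ := by
  have h11 : A 1 1 = 0 := by linarith [Matrix.apply_eq_neg_of_transpose_eq_neg hA 1 1]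
  calc |A 1 0 * t + b 1| = ‖rigid A b (xAxis t) 1‖ := by simp [rigid, xAxis, h11]
    _ ≤ _ := PiLp.norm_apply_le _ 1

theorem Isometry.setLIntegral_preimage_hausdorffMeasure {X Y : Type*}
    [MetricSpace X] [CompleteSpace X] [MeasurableSpace X] [BorelSpace X]
    [MetricSpace Y] [MeasurableSpace Y] [BorelSpace Y]
    {e : X → Y} (he : Isometry e) {d : ℝ} (hd : 0 ≤ d) (f : Y → ℝ≥0∞) {s : Set Y}
    (hs : s ⊆ range e) :
    ∫⁻ x in e ⁻¹' s, f (e x) ∂μH[d] = ∫⁻ y in s, f y ∂μH[d] := by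
  have hmp : MeasurePreserving e μH[d] (μH[d].restrict (range e)) :=
    ⟨he.continuous.measurable, he.map_hausdorffMeasure (Or.inl hd)⟩
  rw [hmp.setLIntegral_comp_preimage_emb he.isClosedEmbedding.measurableEmbedding,
    Measure.restrict_restrict_of_subset hs]

theorem volume_setOf_abs_mul_add_lt {a : ℝ} (ha : a ≠ 0) (β ε : ℝ) :
    volume {t : ℝ | |a * t + β| < ε} = ENNReal.ofReal (2 * ε / |a|) := by
  have : {t : ℝ | |a * t + β| < ε} = Metric.ball (-β / a) (ε / |a|) := by
    ext t
    rw [mem_ofPred_eq, Metric.mem_ball, Real.dist_eq, lt_div_iff₀ (abs_pos.2 ha), ← abs_mul]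
    congr! 2
    field_simp
    ring
  rw [this, Real.volume_ball, mul_div_assoc]

theorem MeasureTheory.measure_div_two_le_measure_inter {α : Type*} [MeasurableSpace α]
    {μ : Measure α} {s t : Set α} (hs : μ s ≠ ∞) (h : μ (s \ t) ≤ μ s / 2) :
    μ s / 2 ≤ μ (s ∩ t) := by
  have hle : μ s / 2 + μ s / 2 ≤ μ (s ∩ t) + μ s / 2 := by
    rw [ENNReal.add_halves]
    exact (measure_le_inter_add_sdiff μ s t).trans (add_le_add le_rfl h)
  exact (ENNReal.add_le_add_iff_right (ENNReal.div_ne_top hs two_ne_zero)).1 hle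

theorem MeasureTheory.ofReal_rpow_mul_measure_inter_le_setLIntegral {α : Type*}
    [MeasurableSpace α] (μ : Measure α) (s : Set α) {f : α → ℝ} (hf : Measurable f)
    {ε q : ℝ} (hε : 0 ≤ ε) (hq : 0 ≤ q) :
    ENNReal.ofReal (ε ^ q) * μ (s ∩ {x | ε ≤ |f x|}) ≤
      ∫⁻ x in s, ENNReal.ofReal (|f x| ^ q) ∂μ := calc
  _ = ∫⁻ _ in s ∩ {x | ε ≤ |f x|}, ENNReal.ofReal (ε ^ q) ∂μ :=
    (setLIntegral_const _ _).symm
  _ ≤ ∫⁻ x in s ∩ {x | ε ≤ |f x|}, ENNReal.ofReal (|f x| ^ q) ∂μ :=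
    setLIntegral_mono (by fun_prop) fun x hx ↦
      ENNReal.ofReal_le_ofReal (Real.rpow_le_rpow hε hx.2 hq)
  _ ≤ _ := lintegral_mono_set inter_subset_left

theorem volume_rpow_mul_abs_rpow_le_setLIntegral {S : Set ℝ} (hS : volume S ≠ ∞)
    (a β : ℝ) {q : ℝ} (hq : 0 < q) :
    volume S ^ (q + 1) * ENNReal.ofReal (|a| ^ q) ≤
      ENNReal.ofReal (2 * 4 ^ q) * ∫⁻ t in S, ENNReal.ofReal (|a * t + β| ^ q) := by
  rcases eq_or_ne a 0 with rfl | ha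
  · simp [Real.zero_rpow hq.ne']
  rcases eq_or_ne (volume S) 0 with hS0 | hS0
  · simp [hS0, ENNReal.zero_rpow_of_pos (by linarith : 0 < q + 1)]
  set L := (volume S).toReal
  have hL : 0 < L := ENNReal.toReal_pos hS0 hS
  have hhalf : volume S / 2 = ENNReal.ofReal (L / 2) := by
    rw [ENNReal.ofReal_div_of_pos two_pos, ENNReal.ofReal_ofNat, ENNReal.ofReal_toReal hS]
  set ε := |a| * L / 4
  -- `ε` is chosen so that the interval where `|a t + β| < ε` has length `L / 2`.
  have hbad : volume (S \ {t | ε ≤ |a * t + β|}) ≤ volume S / 2 := calc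
    _ ≤ volume {t : ℝ | |a * t + β| < ε} := measure_mono fun t ht ↦ by simpa using ht.2
    _ = volume S / 2 := by
      rw [volume_setOf_abs_mul_add_lt ha, hhalf]
      congr 1
      field_simp
      ring
  have hconst : L ^ (q + 1) * |a| ^ q = 2 * 4 ^ q * (ε ^ q * (L / 2)) := by
    rw [Real.div_rpow (by positivity) (by norm_num), Real.mul_rpow (abs_nonneg a) hL.le,
      Real.rpow_add_one hL.ne']
    field_simp
  calc volume S ^ (q + 1) * ENNReal.ofReal (|a| ^ q)
      = ENNReal.ofReal (2 * 4 ^ q) * (ENNReal.ofReal (ε ^ q) * (volume S / 2)) := by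
        rw [hhalf, ← ENNReal.ofReal_toReal hS, ENNReal.ofReal_rpow_of_pos hL,
          ← ENNReal.ofReal_mul (by positivity), ← ENNReal.ofReal_mul (by positivity),
          ← ENNReal.ofReal_mul (by positivity), hconst]
    _ ≤ ENNReal.ofReal (2 * 4 ^ q) *
          (ENNReal.ofReal (ε ^ q) * volume (S ∩ {t | ε ≤ |a * t + β|})) := by
        gcongr
        exact measure_div_two_le_measure_inter hS hbad
    _ ≤ _ := by
        gcongr
        exact ofReal_rpow_mul_measure_inter_le_setLIntegral _ _ (by fun_prop)
          (by positivity) hq.le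

/-- **Rigid motion estimate on a one-dimensional slice** (Remark 4.2). -/
theorem rigid_motion_slice (q : ℝ) (hq : 1 ≤ q) :
    ∃ c : ℝ, 0 < c ∧
      ∀ Γ : Set E2, MeasurableSet Γ → Γ ⊆ {x : E2 | x 1 = 0} → μH[1] Γ < ⊤ →
      ∀ A : Matrix (Fin 2) (Fin 2) ℝ, Matrix.transpose A = -A → ∀ b : E2,
        (μH[1] Γ) ^ (q + 1) * ENNReal.ofReal (matNorm A ^ q) ≤
          ENNReal.ofReal c * ∫⁻ x in Γ, ENNReal.ofReal (‖rigid A b x‖ ^ q) ∂μH[1] := by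
  have hq0 : 0 < q := by linarith
  refine ⟨√2 ^ q * (2 * 4 ^ q), by positivity, fun Γ _ hΓ hΓfin A hA b ↦ ?_⟩
  have hΓrange := hΓ.trans setOf_apply_one_eq_zero_subset_range_xAxis
  set S := xAxis ⁻¹' Γ
  have hS : μH[1] Γ = volume S := by
    rw [← hausdorffMeasure_real, ← isometry_xAxis.hausdorffMeasure_image (Or.inl zero_le_one),
      image_preimage_eq_of_subset hΓrange]
  have hint : ∫⁻ t in S, ENNReal.ofReal (|A 1 0 * t + b 1| ^ q) ≤
      ∫⁻ x in Γ, ENNReal.ofReal (‖rigid A b x‖ ^ q) ∂μH[1] := by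
    rw [← isometry_xAxis.setLIntegral_preimage_hausdorffMeasure zero_le_one _ hΓrange,
      hausdorffMeasure_real]
    exact lintegral_mono fun t ↦ ENNReal.ofReal_le_ofReal
      (Real.rpow_le_rpow (abs_nonneg _) (abs_mul_add_le_norm_rigid_xAxis hA b t) hq0.le)
  calc (μH[1] Γ) ^ (q + 1) * ENNReal.ofReal (matNorm A ^ q)
      = ENNReal.ofReal (√2 ^ q) * (volume S ^ (q + 1) * ENNReal.ofReal (|A 1 0| ^ q)) := by
        rw [hS, matNorm_eq_sqrt_two_mul_abs hA, Real.mul_rpow (by positivity) (abs_nonneg _),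
          ENNReal.ofReal_mul (by positivity)]
        ring
    _ ≤ ENNReal.ofReal (√2 ^ q) * (ENNReal.ofReal (2 * 4 ^ q) *
          ∫⁻ t in S, ENNReal.ofReal (|A 1 0 * t + b 1| ^ q)) := by
        gcongr ENNReal.ofReal (√2 ^ q) * ?_
        exact volume_rpow_mul_abs_rpow_le_setLIntegral (hS ▸ hΓfin.ne) _ _ hq0
    _ ≤ _ := by
        rw [ENNReal.ofReal_mul (p := √2 ^ q) (by positivity), mul_assoc]
        gcongr
end
end

section
/- Compactness bound for infinitesimal rigid motions (Lemma 4.1). Let M > 0, δ > 0, let F ⊆ ℝ² be a bounded measurable set, and let ψ : [0,∞) → [0,∞) be a continuous nondecreasing function with ψ(s) → ∞ as s → ∞. Then there exists a constant C = C(M, δ, ψ, F) > 0 such that for every Borel set E ⊆ F with |E| ≥ δ, every skew-symmetric A ∈ ℝ^{2×2} and every b ∈ ℝ²: if ∫_E ψ(|A·x + b|) dx ≤ M, then |A| + |b| ≤ C. -/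
/-
Write a skew-symmetric `A` as `a J` with `J` the rotation by `π/2`, so that `|A x| = |a| |x|` and,
for `a ≠ 0`, `|A x + b| = |a| |x - c|` for a centre `c`. Choose `s` so large that `ψ ≥ K` on
`[s, ∞)`, where `K δ / 2 > M`. The energy bound then forces the part of `E` in the sublevel set
`{|A x + b| < s}` to have area more than `δ / 2`; as that set is a disc of radius `s / |a|`, this
gives `π s² / a² > δ / 2`, bounding `|a|`. Any point `x` of that sublevel set lies in the bounded set `F`, and
`|b| ≤ |A x + b| + |a| |x|` bounds `|b|`.
-/

open MeasureTheory Set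
open scoped ENNReal NNReal

noncomputable section

open Matrix

section Chebyshev

variable {α : Type*} [MeasurableSpace α] {μ : Measure α}

theorem ofReal_half_lt_measure_inter_of_setLIntegral_le {E S : Set α} (hE : MeasurableSet E)
    (hS : MeasurableSet S) {f : α → ℝ} {K δ M : ℝ} (hK : 0 < K) (hδ : 0 < δ)
    (hKM : M < K * (δ / 2)) (hf : ∀ x ∈ E \ S, K ≤ f x) (hEvol : ENNReal.ofReal δ ≤ μ E)
    (hint : ∫⁻ x in E, ENNReal.ofReal (f x) ∂μ ≤ ENNReal.ofReal M) :
    ENNReal.ofReal (δ / 2) < μ (E ∩ S) := by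
  by_contra! hES
  have hdiff : ENNReal.ofReal (δ / 2) ≤ μ (E \ S) := by
    rw [← ENNReal.add_le_add_iff_left ENNReal.ofReal_ne_top]
    calc ENNReal.ofReal (δ / 2) + ENNReal.ofReal (δ / 2) = ENNReal.ofReal δ := by
          rw [← ENNReal.ofReal_add (by positivity) (by positivity), add_halves]
      _ ≤ μ (E ∩ S) + μ (E \ S) := (measure_inter_add_sdiff E hS).symm ▸ hEvol
      _ ≤ ENNReal.ofReal (δ / 2) + μ (E \ S) := by gcongr
  have hKδ : ENNReal.ofReal (K * (δ / 2)) ≤ ENNReal.ofReal M :=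
    calc ENNReal.ofReal (K * (δ / 2)) = ENNReal.ofReal K * ENNReal.ofReal (δ / 2) :=
          ENNReal.ofReal_mul hK.le
      _ ≤ ENNReal.ofReal K * μ (E \ S) := by gcongr
      _ = ∫⁻ _ in E \ S, ENNReal.ofReal K ∂μ := (setLIntegral_const _ _).symm
      _ ≤ ∫⁻ x in E \ S, ENNReal.ofReal (f x) ∂μ :=
          setLIntegral_mono' (hE.diff hS) fun x hx => ENNReal.ofReal_le_ofReal (hf x hx)
      _ ≤ ∫⁻ x in E, ENNReal.ofReal (f x) ∂μ := lintegral_mono_set sdiff_subset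
      _ ≤ ENNReal.ofReal M := hint
  exact hKδ.not_gt ((ENNReal.ofReal_lt_ofReal_iff (by positivity)).2 hKM)

end Chebyshev

theorem continuous_rigid (A : Matrix (Fin 2) (Fin 2) ℝ) (b : E2) : Continuous (rigid A b) :=
  (toEuclideanLin A).continuous_of_finiteDimensional.add continuous_const

section Skew

variable {A : Matrix (Fin 2) (Fin 2) ℝ}

theorem entries_of_skew (hA : Aᵀ = -A) : A 0 0 = 0 ∧ A 1 1 = 0 ∧ A 0 1 = -A 1 0 := by
  have h i j : A j i = -A i j := congrFun (congrFun hA i) j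
  exact ⟨by linarith [h 0 0], by linarith [h 1 1], h 1 0⟩

theorem matNorm_of_skew (hA : Aᵀ = -A) : matNorm A = √2 * |A 1 0| := by
  obtain ⟨h00, h11, h01⟩ := entries_of_skew hA
  rw [matNorm, Fin.sum_univ_two, Fin.sum_univ_two, Fin.sum_univ_two, h00, h11, h01,
    show (0:ℝ) ^ 2 + (-A 1 0) ^ 2 + (A 1 0 ^ 2 + 0 ^ 2) = 2 * A 1 0 ^ 2 by ring,
    Real.sqrt_mul zero_le_two, Real.sqrt_sq_eq_abs]

theorem norm_toEuclideanLin_of_skew (hA : Aᵀ = -A) (x : E2) :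
    ‖toEuclideanLin A x‖ = |A 1 0| * ‖x‖ := by
  obtain ⟨h00, h11, h01⟩ := entries_of_skew hA
  have hsq : ‖toEuclideanLin A x‖ ^ 2 = (|A 1 0| * ‖x‖) ^ 2 := by
    simp only [EuclideanSpace.real_norm_sq_eq, mul_pow, sq_abs, Fin.sum_univ_two,
      toLpLin_apply, mulVec, dotProduct]
    rw [h00, h11, h01]
    ring
  exact (pow_left_inj₀ (norm_nonneg _) (by positivity) two_ne_zero).1 hsq

theorem exists_norm_rigid_eq_dist (hA : Aᵀ = -A) (ha : A 1 0 ≠ 0) (b : E2) :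
    ∃ c : E2, ∀ x, ‖rigid A b x‖ = |A 1 0| * dist x c := by
  have hinj : Function.Injective (toEuclideanLin A) := by
    rw [← LinearMap.ker_eq_bot, LinearMap.ker_eq_bot']
    intro x hx
    simpa [hx, ha] using norm_toEuclideanLin_of_skew hA x
  obtain ⟨c, hc⟩ := LinearMap.injective_iff_surjective.1 hinj (-b)
  refine ⟨c, fun x => ?_⟩
  rw [rigid, ← neg_neg b, ← hc, ← sub_eq_add_neg, ← map_sub, norm_toEuclideanLin_of_skew hA,
    dist_eq_norm]

theorem abs_le_of_ofReal_half_lt_volume (hA : Aᵀ = -A) {b : E2} {s δ : ℝ} (hδ : 0 < δ)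
    (hs : 0 ≤ s) (hvol : ENNReal.ofReal (δ / 2) < volume {x | ‖rigid A b x‖ < s}) :
    |A 1 0| ≤ s * √(2 * Real.pi / δ) := by
  rcases eq_or_ne (A 1 0) 0 with ha | ha
  · rw [ha, abs_zero]
    positivity
  obtain ⟨c, hc⟩ := exists_norm_rigid_eq_dist hA ha b
  have hpos : 0 < |A 1 0| := abs_pos.2 ha
  have hball : {x | ‖rigid A b x‖ < s} = Metric.ball c (s / |A 1 0|) := by
    ext x
    simp [hc, lt_div_iff₀ hpos, mul_comm]
  have hvol' : δ / 2 < (s / |A 1 0|) ^ 2 * Real.pi := by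
    rw [hball, EuclideanSpace.volume_ball_fin_two, ← ENNReal.ofReal_pow (by positivity),
      ← ENNReal.ofReal_mul (by positivity)] at hvol
    exact (ENNReal.ofReal_lt_ofReal_iff'.1 hvol).1
  rw [div_pow, div_mul_eq_mul_div, lt_div_iff₀ (by positivity), sq_abs] at hvol'
  rw [← Real.sqrt_sq hs, ← Real.sqrt_mul (sq_nonneg s)]
  refine Real.abs_le_sqrt ?_
  rw [mul_div_assoc', le_div_iff₀ hδ]
  linarith

theorem norm_le_norm_rigid_add (hA : Aᵀ = -A) (b x : E2) :
    ‖b‖ ≤ ‖rigid A b x‖ + |A 1 0| * ‖x‖ := by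
  rw [← norm_toEuclideanLin_of_skew hA]
  simpa [rigid] using norm_sub_le (rigid A b x) (toEuclideanLin A x)

end Skew

theorem rigid_motion_compactness_general (M δ : ℝ) (hδ : 0 < δ)
    (F : Set E2) (hFbdd : Bornology.IsBounded F)
    (ψ : ℝ → ℝ)
    (hψtop : Filter.Tendsto ψ Filter.atTop Filter.atTop) :
    ∃ C : ℝ, 0 < C ∧
      ∀ E : Set E2, MeasurableSet E → E ⊆ F → ENNReal.ofReal δ ≤ volume E →
      ∀ A : Matrix (Fin 2) (Fin 2) ℝ, Matrix.transpose A = -A → ∀ b : E2,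
        (∫⁻ x in E, ENNReal.ofReal (ψ ‖rigid A b x‖)) ≤ ENNReal.ofReal M →
        matNorm A + ‖b‖ ≤ C := by
  obtain ⟨R, hR, hFR⟩ := hFbdd.subset_closedBall_lt 0 0
  obtain ⟨K, hK, hKM⟩ : ∃ K > 0, M < K * (δ / 2) :=
    ⟨2 * |M| / δ + 1, by positivity, by field_simp; linarith [le_abs_self M]⟩
  obtain ⟨s, hs⟩ := Filter.eventually_atTop.1
    ((hψtop.eventually_ge_atTop K).and (Filter.eventually_gt_atTop 0))
  set a₀ := s * √(2 * Real.pi / δ)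
  have hs_pos : 0 < s := (hs s le_rfl).2
  refine ⟨√2 * a₀ + (s + a₀ * R), by positivity, ?_⟩
  intro E hE hEF hEvol A hA b hint
  have hsub := ofReal_half_lt_measure_inter_of_setLIntegral_le hE
    (isOpen_lt (continuous_rigid A b).norm continuous_const).measurableSet hK hδ hKM
    (fun x hx => (hs _ (not_lt.1 hx.2)).1) hEvol hint
  have ha : |A 1 0| ≤ a₀ :=
    abs_le_of_ofReal_half_lt_volume hA hδ hs_pos.le (hsub.trans_le (measure_mono inter_subset_right))
  obtain ⟨x, hxE, hxs⟩ := nonempty_of_measure_ne_zero (pos_of_gt hsub).ne'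
  have hx : ‖x‖ ≤ R := mem_closedBall_zero_iff.1 (hFR (hEF hxE))
  have hb : ‖b‖ ≤ s + a₀ * R := (norm_le_norm_rigid_add hA b x).trans
    (add_le_add hxs.le (mul_le_mul ha hx (norm_nonneg x) (by positivity)))
  rw [matNorm_of_skew hA]
  gcongr

/-- **Compactness bound for infinitesimal rigid motions** (Lemma 4.1). -/
theorem rigid_motion_compactness (M δ : ℝ) (hM : 0 < M) (hδ : 0 < δ)
    (F : Set E2) (hFbdd : Bornology.IsBounded F) (hFmeas : MeasurableSet F)
    (ψ : ℝ → ℝ) (hψcont : ContinuousOn ψ (Ici 0)) (hψmono : MonotoneOn ψ (Ici 0))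
    (hψnonneg : ∀ s : ℝ, 0 ≤ s → 0 ≤ ψ s)
    (hψtop : Filter.Tendsto ψ Filter.atTop Filter.atTop) :
    ∃ C : ℝ, 0 < C ∧
      ∀ E : Set E2, MeasurableSet E → E ⊆ F → ENNReal.ofReal δ ≤ volume E →
      ∀ A : Matrix (Fin 2) (Fin 2) ℝ, Matrix.transpose A = -A → ∀ b : E2,
        (∫⁻ x in E, ENNReal.ofReal (ψ ‖rigid A b x‖)) ≤ ENNReal.ofReal M →
        matNorm A + ‖b‖ ≤ C :=
  rigid_motion_compactness_general M δ hδ F hFbdd ψ hψtop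
end
end

section
/- Elementary lemma about the distance of sets (Lemma 'topo'). Let n ≥ 2 and m ≥ 0, let F₁,…,F_n ⊆ ℝ² be pairwise disjoint nonempty closed connected sets and R₁,…,R_m ⊆ ℝ² pairwise disjoint nonempty closed connected sets; set F = ⋃_{j=1}^n F_j and R = ⋃_{l=1}^m R_l. Let G ⊆ ℝ² be a closed, path-connected set with F ⊆ G, and let d > 0 be such that dist(x, F) ≤ d for all x ∈ G \ R. Then for each j ∈ {1,…,n} there exists k ∈ {1,…,n} with k ≠ j such that either (a) dist(F_j, F_k) ≤ 4d, or (b) there exists l ∈ {1,…,m} with dist(F_j, R_l) ≤ 4d and dist(F_k, R_l) ≤ 4d. (Here dist(A,B) = inf{|x − y| : x ∈ A, y ∈ B} and dist(x,A) = inf{|x − y| : y ∈ A}.) -/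
/-!
Suppose the conclusion fails for `F j`. Let `W` consist of the points within `d` of `F j`
together with the obstacles `R l` that are `4d`-close to `F j`; it is closed. A connected piece
of `G` inside a `d`-ball around a point of `W` stays in `W`: a point of the piece outside the
obstacles is `d`-close to some `F i`, and `i = j` because otherwise `F i` would be `4d`-close
to `F j` or to an obstacle of `W`; a point of the piece in an obstacle is `3d`-close to `F j`,
since the piece either contains a point `d`-close to `F j` or meets two disjoint closed
obstacles and therefore leaves the obstacles. Hence a path in `G` from `F j` to another `F k`
never leaves `W`, and its endpoint in `F k` contradicts the choice of `j`.
-/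

open MeasureTheory Set
open scoped ENNReal NNReal

noncomputable section

/-- The distance between two subsets of the plane,
`dist(A,B) = inf {|x - y| : x ∈ A, y ∈ B}` (valued in `ℝ≥0∞`). -/
def setDist (A B : Set E2) : ℝ≥0∞ := ⨅ a ∈ A, EMetric.infEdist a B

open Function Metric Topology

theorem IsPreconnected.subset_of_subset_iUnion {X ι : Type*} [TopologicalSpace X] [Finite ι]
    {s : ι → Set X} (hs : ∀ i, IsClosed (s i)) (hdisj : Pairwise (Disjoint on s)) {C : Set X}
    (hC : IsPreconnected C) (hCs : C ⊆ ⋃ i, s i) {i : ι} {x : X} (hxC : x ∈ C) (hxi : x ∈ s i) :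
    C ⊆ s i := by
  have hrest : IsClosed (⋃ k ∈ ({i}ᶜ : Set ι), s k) :=
    (toFinite _).isClosed_biUnion fun k _ => hs k
  have hcover : C ⊆ s i ∪ ⋃ k ∈ ({i}ᶜ : Set ι), s k := fun y hy => by
    obtain ⟨k, hk⟩ := mem_iUnion.1 (hCs hy)
    rcases eq_or_ne k i with rfl | hki
    · exact .inl hk
    · exact .inr (mem_biUnion hki hk)
  have hsep : C ∩ (s i ∩ ⋃ k ∈ ({i}ᶜ : Set ι), s k) = ∅ := by
    refine eq_empty_of_subset_empty fun y ⟨_, hyi, hyrest⟩ => ?_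
    obtain ⟨k, hki, hyk⟩ := mem_iUnion₂.1 hyrest
    exact disjoint_left.1 (hdisj hki) hyk hyi
  exact (isPreconnected_iff_subset_of_disjoint_closed.1 hC _ _ (hs i) hrest hcover hsep)
    |>.resolve_right fun hCrest => hsep.subset ⟨hxC, hxi, hCrest hxC⟩

theorem mem_of_joinedIn_of_isClosed {X : Type*} [TopologicalSpace X] {G W : Set X} {a b : X}
    (hab : JoinedIn G a b) (hW : IsClosed W) (ha : a ∈ W)
    (hloc : ∀ x ∈ W, ∃ U ∈ 𝓝 x, ∀ C ⊆ G ∩ U, IsPreconnected C → x ∈ C → C ⊆ W) : b ∈ W := by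
  set f := hab.somePath.extend
  have hf : Continuous f := hab.somePath.continuous_extend
  have hopen : IsOpen (f ⁻¹' W) := isOpen_iff_mem_nhds.2 fun t ht => by
    obtain ⟨U, hU, hUW⟩ := hloc _ ht
    have hV : f ⁻¹' U ∈ 𝓝 t := hf.continuousAt.preimage_mem_nhds hU
    refine Filter.mem_of_superset (connectedComponentIn_mem_nhds hV) (image_subset_iff.1 ?_)
    refine hUW _ (subset_inter ?_ ?_) (isPreconnected_connectedComponentIn.image f hf.continuousOn)
      (mem_image_of_mem f (mem_connectedComponentIn (mem_of_mem_nhds hV)))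
    · rintro _ ⟨s, -, rfl⟩
      exact hab.somePath_mem _
    · exact image_subset_iff.2 (connectedComponentIn_subset _ _)
  have hall := IsClopen.eq_univ ⟨hW.preimage hf, hopen⟩ ⟨0, by simpa [f] using ha⟩
  simpa [f] using eq_univ_iff_forall.1 hall 1

theorem Metric.exists_infEDist_le_of_infEDist_iUnion_le {X ι : Type*} [PseudoEMetricSpace X]
    [Finite ι] [Nonempty ι] {s : ι → Set X} {x : X} {r : ℝ≥0∞}
    (h : infEDist x (⋃ i, s i) ≤ r) : ∃ i, infEDist x (s i) ≤ r := by
  obtain ⟨i, hi⟩ := Finite.exists_min fun i => infEDist x (s i)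
  exact ⟨i, (le_iInf hi).trans (infEDist_iUnion s x ▸ h)⟩

theorem setDist_le_infEDist_add_infEDist (x : E2) (A B : Set E2) :
    setDist A B ≤ infEDist x A + infEDist x B := by
  calc setDist A B ≤ ⨅ a ∈ A, (edist x a + infEDist x B) := iInf₂_mono fun a _ =>
        infEDist_le_edist_add_infEDist.trans_eq (by rw [edist_comm])
    _ = infEDist x A + infEDist x B := by simp only [infEDist, ENNReal.iInf_add]

theorem setDist_le_infEDist_of_mem {x : E2} {A B : Set E2} (hx : x ∈ B) :
    setDist A B ≤ infEDist x A := by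
  simpa [infEDist_zero_of_mem hx] using setDist_le_infEDist_add_infEDist x A B

theorem ENNReal.add_add_self_le_four_mul (r : ℝ≥0∞) : r + r + r ≤ 4 * r := by
  calc r + r + r = 3 * r := by ring
    _ ≤ 4 * r := by gcongr; norm_num

section Cluster

variable {ι κ : Type*} (F : ι → Set E2) (R : κ → Set E2) (j : ι) (r : ℝ≥0∞)

def cluster : Set E2 :=
  {x | infEDist x (F j) ≤ r} ∪ ⋃ (l) (_ : setDist (F j) (R l) ≤ 4 * r), R l

def IsIsolated : Prop :=
  ∀ k ≠ j, 4 * r < setDist (F j) (F k) ∧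
    ∀ l, setDist (F j) (R l) ≤ 4 * r → 4 * r < setDist (F k) (R l)

variable {F R j r}

theorem isClosed_cluster [Finite κ] (hR : ∀ l, IsClosed (R l)) : IsClosed (cluster F R j r) :=
  (isClosed_le continuous_infEDist continuous_const).union
    (isClosed_iUnion_of_finite fun l => isClosed_iUnion_of_finite fun _ => hR l)

theorem eq_of_mem_cluster (h : IsIsolated F R j r) {x y : E2} (hx : x ∈ cluster F R j r)
    (hxy : edist y x ≤ r) {i : ι} (hi : infEDist y (F i) ≤ r) : i = j := by
  by_contra hij
  rcases hx with hx | hx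
  · refine (h i hij).1.not_ge ?_
    calc setDist (F j) (F i) ≤ infEDist y (F j) + infEDist y (F i) :=
          setDist_le_infEDist_add_infEDist y _ _
      _ ≤ edist y x + infEDist x (F j) + r := by gcongr; exact infEDist_le_edist_add_infEDist
      _ ≤ 4 * r :=
          le_trans (add_le_add (add_le_add hxy hx) le_rfl) (ENNReal.add_add_self_le_four_mul r)
  · obtain ⟨l, hl, hxl⟩ := mem_iUnion₂.1 hx
    refine ((h i hij).2 l hl).not_ge ?_
    calc setDist (F i) (R l) ≤ infEDist y (F i) + infEDist y (R l) :=
          setDist_le_infEDist_add_infEDist y _ _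
      _ ≤ r + r := add_le_add hi ((infEDist_le_edist_of_mem hxl).trans hxy)
      _ ≤ 4 * r := le_self_add.trans (ENNReal.add_add_self_le_four_mul r)

theorem subset_cluster [Finite ι] [Finite κ] (h : IsIsolated F R j r) (hR : ∀ l, IsClosed (R l))
    (hRdisj : Pairwise (Disjoint on R)) {G : Set E2}
    (hdist : ∀ x ∈ G \ ⋃ l, R l, infEDist x (⋃ i, F i) ≤ r) {x : E2}
    (hx : x ∈ cluster F R j r) {C : Set E2} (hCG : C ⊆ G) (hCx : C ⊆ eball x r)
    (hC : IsPreconnected C) (hxC : x ∈ C) : C ⊆ cluster F R j r := by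
  have : Nonempty ι := ⟨j⟩
  have hnear : ∀ y ∈ C, y ∉ ⋃ l, R l → infEDist y (F j) ≤ r := fun y hy hyR => by
    obtain ⟨i, hi⟩ := exists_infEDist_le_of_infEDist_iUnion_le (hdist y ⟨hCG hy, hyR⟩)
    obtain rfl := eq_of_mem_cluster h hx (mem_eball.1 (hCx hy)).le hi
    exact hi
  intro y hy
  by_cases hyR : y ∈ ⋃ l, R l
  swap
  · exact .inl (hnear y hy hyR)
  obtain ⟨l', hyl'⟩ := mem_iUnion.1 hyR
  refine .inr (mem_iUnion₂.2 ⟨l', ?_, hyl'⟩)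
  have hvia : ∀ z ∈ C, infEDist z (F j) ≤ r → setDist (F j) (R l') ≤ 4 * r := fun z hz hzj =>
    calc setDist (F j) (R l') ≤ infEDist y (F j) := setDist_le_infEDist_of_mem hyl'
      _ ≤ edist y x + edist x z + infEDist z (F j) :=
          infEDist_le_edist_add_infEDist.trans (by gcongr; exact edist_triangle y x z)
      _ ≤ 4 * r := le_trans (add_le_add (add_le_add (mem_eball.1 (hCx hy)).le
          (mem_eball'.1 (hCx hz)).le) hzj) (ENNReal.add_add_self_le_four_mul r)
  rcases hx with hx | hx
  · exact hvia x hxC hx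
  obtain ⟨l, hl, hxl⟩ := mem_iUnion₂.1 hx
  rcases eq_or_ne l l' with rfl | hll'
  · exact hl
  obtain ⟨z, hzC, hzR⟩ : ∃ z ∈ C, z ∉ ⋃ l, R l := by
    by_contra! hCR
    have hCl := hC.subset_of_subset_iUnion hR hRdisj hCR hxC hxl
    exact disjoint_left.1 (hRdisj hll') (hCl hy) hyl'
  exact hvia z hzC (hnear z hzC hzR)

theorem notMem_cluster (h : IsIsolated F R j r) {k : ι} (hkj : k ≠ j) {b : E2} (hb : b ∈ F k) :
    b ∉ cluster F R j r := by
  rintro (hbj | hbR)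
  · refine (h k hkj).1.not_ge ?_
    calc setDist (F j) (F k) ≤ infEDist b (F j) := setDist_le_infEDist_of_mem hb
      _ ≤ 4 * r := hbj.trans (le_add_self.trans (ENNReal.add_add_self_le_four_mul r))
  · obtain ⟨l, hl, hbl⟩ := mem_iUnion₂.1 hbR
    refine ((h k hkj).2 l hl).not_ge ?_
    calc setDist (F k) (R l) ≤ infEDist b (F k) := setDist_le_infEDist_of_mem hbl
      _ = 0 := infEDist_zero_of_mem hb
      _ ≤ 4 * r := by positivity

theorem not_isIsolated [Finite ι] [Finite κ] (hR : ∀ l, IsClosed (R l))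
    (hRdisj : Pairwise (Disjoint on R)) {G : Set E2} (hG : IsPathConnected G)
    (hFG : (⋃ i, F i) ⊆ G) (hr : r ≠ 0)
    (hdist : ∀ x ∈ G \ ⋃ l, R l, infEDist x (⋃ i, F i) ≤ r) {k : ι} (hkj : k ≠ j) {a b : E2}
    (ha : a ∈ F j) (hb : b ∈ F k) : ¬ IsIsolated F R j r := by
  intro h
  have haG : a ∈ G := hFG (mem_iUnion_of_mem j ha)
  have hbG : b ∈ G := hFG (mem_iUnion_of_mem k hb)
  refine notMem_cluster h hkj hb (mem_of_joinedIn_of_isClosed (hG.joinedIn a haG b hbG)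
    (isClosed_cluster hR) (.inl (by simp [infEDist_zero_of_mem ha])) fun x hx => ?_)
  exact ⟨eball x r, eball_mem_nhds x (pos_iff_ne_zero.2 hr), fun C hC hCpre hxC =>
    subset_cluster h hR hRdisj hdist hx (hC.trans inter_subset_left)
      (hC.trans inter_subset_right) hCpre hxC⟩

end Cluster

theorem distance_of_sets_general (n m : ℕ) (hn : 2 ≤ n)
    (F : Fin n → Set E2) (R : Fin m → Set E2)
    (hFne : ∀ j, (F j).Nonempty)
    (hRcl : ∀ l, IsClosed (R l))
    (hRdisj : Pairwise (Function.onFun Disjoint R))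
    (G : Set E2) (hGpath : IsPathConnected G)
    (hFG : (⋃ j, F j) ⊆ G)
    (d : ℝ) (hd : 0 < d)
    (hdist : ∀ x ∈ G \ ⋃ l, R l, EMetric.infEdist x (⋃ j, F j) ≤ ENNReal.ofReal d) :
    ∀ j, ∃ k, k ≠ j ∧
      (setDist (F j) (F k) ≤ ENNReal.ofReal (4 * d) ∨
        ∃ l, setDist (F j) (R l) ≤ ENNReal.ofReal (4 * d) ∧
          setDist (F k) (R l) ≤ ENNReal.ofReal (4 * d)) := by
  intro j
  have : Nontrivial (Fin n) := Fin.nontrivial_iff_two_le.2 hn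
  obtain ⟨k, hkj⟩ := exists_ne j
  have h4d : ENNReal.ofReal (4 * d) = 4 * ENNReal.ofReal d := by
    rw [ENNReal.ofReal_mul (by norm_num)]
    norm_num
  by_contra! hisol
  rw [h4d] at hisol
  exact not_isIsolated hRcl hRdisj hGpath hFG (ENNReal.ofReal_pos.2 hd).ne' hdist hkj
    (hFne j).some_mem (hFne k).some_mem hisol

/-- **Elementary lemma about the distance of sets** (Lemma 3.3 / "topo"). -/
theorem distance_of_sets (n m : ℕ) (hn : 2 ≤ n)
    (F : Fin n → Set E2) (R : Fin m → Set E2)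
    (hFne : ∀ j, (F j).Nonempty) (hFcl : ∀ j, IsClosed (F j))
    (hFconn : ∀ j, IsConnected (F j))
    (hFdisj : Pairwise (Function.onFun Disjoint F))
    (hRne : ∀ l, (R l).Nonempty) (hRcl : ∀ l, IsClosed (R l))
    (hRconn : ∀ l, IsConnected (R l))
    (hRdisj : Pairwise (Function.onFun Disjoint R))
    (G : Set E2) (hGcl : IsClosed G) (hGpath : IsPathConnected G)
    (hFG : (⋃ j, F j) ⊆ G)
    (d : ℝ) (hd : 0 < d)
    (hdist : ∀ x ∈ G \ ⋃ l, R l, EMetric.infEdist x (⋃ j, F j) ≤ ENNReal.ofReal d) :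
    ∀ j, ∃ k, k ≠ j ∧
      (setDist (F j) (F k) ≤ ENNReal.ofReal (4 * d) ∨
        ∃ l, setDist (F j) (R l) ≤ ENNReal.ofReal (4 * d) ∧
          setDist (F k) (R l) ≤ ENNReal.ofReal (4 * d)) :=
  distance_of_sets_general n m hn F R hFne hRcl hRdisj G hGpath hFG d hd hdist
end
end

section
/- John domains are plump (Lemma 3.4). Let d ≥ 1, ρ ≥ 1, and let Ω ⊂ ℝ^d be a ρ-John domain with respect to some John center x₀ ∈ Ω. Then for every x ∈ Ω and every r > 0 with Ω \ B_r(x) ≠ ∅ there exists z ∈ closure(B_r(x)) such that B_{r/(2ρ)}(z) ⊆ Ω. In particular, |Ω| ≥ |B₁(0)|·(2ρ)^{−d}·(diam Ω)^d, where |B₁(0)| is the Lebesgue measure of the unit ball in ℝ^d. -/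
open MeasureTheory Set
open scoped ENNReal NNReal

noncomputable section

/-- `d`-dimensional Euclidean space. -/
abbrev Ed (d : ℕ) := EuclideanSpace ℝ (Fin d)

/-- `Ω` is a `ρ`-John domain with John center `x₀`: a bounded open connected set
such that every `x ∈ Ω` is joined to `x₀` by an arc-length parametrized curve `γ`
inside `Ω` with `t ≤ ρ · dist(γ(t), ∂Ω)`. -/
def IsJohnDomain (d : ℕ) (ρ : ℝ) (Ω : Set (Ed d)) (x₀ : Ed d) : Prop :=
  IsOpen Ω ∧ IsConnected Ω ∧ Bornology.IsBounded Ω ∧ x₀ ∈ Ω ∧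
  ∀ x ∈ Ω, ∃ (L : ℝ) (γ : ℝ → Ed d), 0 ≤ L ∧ γ 0 = x ∧ γ L = x₀ ∧
    (∀ t ∈ Icc (0 : ℝ) L, γ t ∈ Ω) ∧
    (∀ t ∈ Icc (0 : ℝ) L, eVariationOn γ (Icc 0 t) = ENNReal.ofReal t) ∧
    (∀ t ∈ Icc (0 : ℝ) L, t ≤ ρ * Metric.infDist (γ t) (frontier Ω))

open Set.Notation in
lemma aux_frontier_infDist_le {d : ℕ} {Ω : Set (Ed d)} (hop : IsOpen Ω) {z y : Ed d}
    (hz : z ∈ Ω) (hy : y ∉ Ω) : Metric.infDist z (frontier Ω) ≤ dist z y := by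
  have hseg : ∃ w ∈ segment ℝ z y, w ∈ frontier Ω := by
    by_contra h
    push_neg at h
    have hdisj : Disjoint (frontier Ω) (segment ℝ z y) :=
      Set.disjoint_left.mpr fun w hw hw' => h w hw' hw
    have hcl : IsClopen ((segment ℝ z y) ↓∩ Ω) := isClopen_preimage_val hop hdisj
    haveI : PreconnectedSpace (segment ℝ z y) :=
      Subtype.preconnectedSpace (convex_segment z y).isPreconnected
    have huniv := hcl.eq_univ ⟨⟨z, left_mem_segment ℝ z y⟩, hz⟩
    have : (⟨y, right_mem_segment ℝ z y⟩ : segment ℝ z y) ∈ (segment ℝ z y) ↓∩ Ω := by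
      rw [huniv]; trivial
    exact hy this
  obtain ⟨w, hwseg, hwf⟩ := hseg
  have h1 : dist z w + dist w y = dist z y := dist_add_dist_of_mem_segment hwseg
  have h2 : Metric.infDist z (frontier Ω) ≤ dist z w := Metric.infDist_le_dist_of_mem hwf
  have := dist_nonneg (x := w) (y := y)
  linarith

lemma aux_ball_subset {d : ℕ} {Ω : Set (Ed d)} (hop : IsOpen Ω) {z : Ed d} (hz : z ∈ Ω) {s : ℝ}
    (hs : s ≤ Metric.infDist z (frontier Ω)) : Metric.ball z s ⊆ Ω := by
  intro y hy
  by_contra hyΩ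
  have h1 := aux_frontier_infDist_le hop hz hyΩ
  rw [Metric.mem_ball, dist_comm] at hy
  linarith

lemma aux_plump (d : ℕ) (ρ : ℝ) (hρ : 1 ≤ ρ)
    (Ω : Set (Ed d)) (x₀ : Ed d) (hΩ : IsJohnDomain d ρ Ω x₀) :
    ∀ x ∈ Ω, ∀ r : ℝ, 0 < r → (Ω \ Metric.ball x r).Nonempty →
      ∃ z ∈ closure (Metric.ball x r), Metric.ball z (r / (2 * ρ)) ⊆ Ω := by
  obtain ⟨hop, -, hbdd, hx₀, hJohn⟩ := hΩ
  intro x hx r hr ⟨y, hyΩ, hyb⟩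
  have hρ0 : 0 < ρ := lt_of_lt_of_le one_pos hρ
  rw [Metric.mem_ball, not_lt] at hyb
  -- produce z ∈ Ω ∩ closure(ball x r) with r/2 ≤ ρ * infDist z ∂Ω
  have key : ∃ z ∈ Ω, z ∈ closure (Metric.ball x r) ∧
      r / 2 ≤ ρ * Metric.infDist z (frontier Ω) := by
    rcases le_or_gt (r / 2) (dist x x₀) with h1 | h1
    · obtain ⟨L, γ, hL0, hγ0, hγL, hmem, hvar, hjohn⟩ := hJohn x hx
      have hLdist : dist x x₀ ≤ L := by
        have h0L : (0 : ℝ) ∈ Icc (0 : ℝ) L := ⟨le_refl 0, hL0⟩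
        have hLL : L ∈ Icc (0 : ℝ) L := ⟨hL0, le_refl L⟩
        have := eVariationOn.edist_le γ h0L hLL
        rw [hvar L hLL, hγ0, hγL] at this
        exact (edist_le_ofReal hL0).mp this
      have ht : r / 2 ∈ Icc (0 : ℝ) L := ⟨by linarith, by linarith⟩
      refine ⟨γ (r / 2), hmem _ ht, ?_, ?_⟩
      · apply subset_closure
        rw [Metric.mem_ball]
        have h0t : (0 : ℝ) ∈ Icc (0 : ℝ) (r / 2) := ⟨le_refl 0, by linarith⟩
        have htt : r / 2 ∈ Icc (0 : ℝ) (r / 2) := ⟨by linarith, le_refl _⟩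
        have := eVariationOn.edist_le γ h0t htt
        rw [hvar _ ht, hγ0] at this
        have hd := (edist_le_ofReal (by linarith)).mp this
        calc dist (γ (r / 2)) x ≤ r / 2 := by rw [dist_comm]; exact hd
        _ < r := by linarith
      · exact hjohn _ ht
    · obtain ⟨L, γ, hL0, hγ0, hγL, hmem, hvar, hjohn⟩ := hJohn y hyΩ
      have hLdist : dist y x₀ ≤ L := by
        have h0L : (0 : ℝ) ∈ Icc (0 : ℝ) L := ⟨le_refl 0, hL0⟩
        have hLL : L ∈ Icc (0 : ℝ) L := ⟨hL0, le_refl L⟩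
        have := eVariationOn.edist_le γ h0L hLL
        rw [hvar L hLL, hγ0, hγL] at this
        exact (edist_le_ofReal hL0).mp this
      have hyx : r ≤ dist y x := hyb
      have hxx₀ : dist y x₀ ≥ dist y x - dist x x₀ := by
        have := dist_triangle y x₀ x
        have := dist_triangle y x x₀
        rw [dist_comm x₀ x] at *
        linarith [dist_triangle y x x₀]
      have hL2 : r / 2 ≤ L := by linarith
      have hj := hjohn L ⟨hL0, le_refl L⟩
      rw [hγL] at hj
      refine ⟨x₀, hx₀, subset_closure ?_, by nlinarith⟩
      rw [Metric.mem_ball, dist_comm]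
      linarith
  obtain ⟨z, hzΩ, hzcl, hzd⟩ := key
  refine ⟨z, hzcl, aux_ball_subset hop hzΩ ?_⟩
  rw [div_le_iff₀ (by positivity)]
  nlinarith

/-- **John domains are plump** (Lemma 3.4). -/
theorem john_domain_plump (d : ℕ) (hd : 1 ≤ d) (ρ : ℝ) (hρ : 1 ≤ ρ)
    (Ω : Set (Ed d)) (x₀ : Ed d) (hΩ : IsJohnDomain d ρ Ω x₀) :
    (∀ x ∈ Ω, ∀ r : ℝ, 0 < r → (Ω \ Metric.ball x r).Nonempty →
      ∃ z ∈ closure (Metric.ball x r), Metric.ball z (r / (2 * ρ)) ⊆ Ω) ∧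
    volume (Metric.ball (0 : Ed d) 1) *
        ENNReal.ofReal ((Metric.diam Ω) ^ d / (2 * ρ) ^ d) ≤ volume Ω := by
  have hρ0 : 0 < ρ := lt_of_lt_of_le one_pos hρ
  haveI : Nonempty (Fin d) := ⟨⟨0, hd⟩⟩
  haveI : Nontrivial (Ed d) := inferInstance
  have hplump := aux_plump d ρ hρ Ω x₀ hΩ
  refine ⟨hplump, ?_⟩
  obtain ⟨hop, -, hbdd, hx₀, -⟩ := hΩ
  set D := Metric.diam Ω with hD
  -- key: for every 0 < r < D the bound holds with r in place of D
  have key : ∀ r : ℝ, 0 < r → r < D →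
      volume (Metric.ball (0 : Ed d) 1) * ENNReal.ofReal (r ^ d / (2 * ρ) ^ d) ≤ volume Ω := by
    intro r hr hrD
    have hex : ∃ p ∈ Ω, ∃ q ∈ Ω, r < dist p q := by
      by_contra h
      push_neg at h
      have : D ≤ r := Metric.diam_le_of_forall_dist_le hr.le fun p hp q hq => h p hp q hq
      linarith
    obtain ⟨p, hp, q, hq, hpq⟩ := hex
    have hqb : q ∈ Ω \ Metric.ball p r := by
      refine ⟨hq, ?_⟩
      rw [Metric.mem_ball, dist_comm]
      exact not_lt.mpr hpq.le
    obtain ⟨z, -, hz⟩ := hplump p hp r hr ⟨q, hqb⟩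
    have hvol : volume (Metric.ball z (r / (2 * ρ))) ≤ volume Ω := measure_mono hz
    have hrr : (0 : ℝ) ≤ r / (2 * ρ) := by positivity
    rw [Measure.addHaar_ball volume z hrr, finrank_euclideanSpace_fin, div_pow] at hvol
    rwa [mul_comm]
  rcases le_or_gt D 0 with hD0 | hD0
  · have : D = 0 := le_antisymm hD0 Metric.diam_nonneg
    rw [this, zero_pow (by omega : d ≠ 0), zero_div]
    simp
  · -- take the limit r → D from the left
    have hlim : Filter.Tendsto
        (fun r : ℝ => volume (Metric.ball (0 : Ed d) 1) * ENNReal.ofReal (r ^ d / (2 * ρ) ^ d))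
        (nhdsWithin D (Iio D))
        (nhds (volume (Metric.ball (0 : Ed d) 1) * ENNReal.ofReal (D ^ d / (2 * ρ) ^ d))) := by
      apply ENNReal.Tendsto.const_mul
      · apply Filter.Tendsto.mono_left _ nhdsWithin_le_nhds
        exact (ENNReal.continuous_ofReal.tendsto _).comp
          (((continuous_pow d).div_const ((2 * ρ) ^ d)).tendsto D)
      · exact Or.inr (measure_ball_lt_top).ne
    haveI : Filter.NeBot (nhdsWithin D (Iio D)) := nhdsWithin_Iio_self_neBot' ⟨0, hD0⟩
    refine le_of_tendsto hlim ?_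
    filter_upwards [Ioo_mem_nhdsLT_of_mem (⟨hD0, le_refl D⟩ : D ∈ Ioc 0 D)] with r hr
    exact key r hr.1 hr.2
end
end
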